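/- arXiv:1903.09352 — 6 statements merged into one kernel-verified Lean document; each statement's English description precedes it below -/
import Mathlib

section
/- Let r and N be positive integers with N ≥ 3^(r² + r). Then for any partition [N] = A_1 ∪ ⋯ ∪ A_r of [N] into r parts, max{R_2(A_i) : 1 ≤ i ≤ r} ≥ N^(1/r) / 3^r. -/
open scoped Classical Pointwise

/-- `a` and `b` are consecutive elements of the finite set `A` of integers. -/
def ConsecIn (A : Finset ℤ) (a b : ℤ) : Prop :=
  a ∈ A ∧ b ∈ A ∧ a < b ∧ ∀ c ∈ A, c ≤ a ∨ b ≤ c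

/-- `A` is `L`-regular: some real `X > 0` bounds all consecutive gaps between `X` and `L*X`. -/
def IsRegularSet (L : ℝ) (A : Finset ℤ) : Prop :=
  ∃ X : ℝ, 0 < X ∧ ∀ a b : ℤ, ConsecIn A a b →
    X ≤ (b : ℝ) - (a : ℝ) ∧ (b : ℝ) - (a : ℝ) ≤ L * X

/-- `R_L(A)`: the maximum cardinality of an `L`-regular subset of `A`. -/
noncomputable def regMax (L : ℝ) (A : Finset ℤ) : ℕ :=
  (A.powerset.filter fun B => IsRegularSet L B).sup Finset.card

/-- `A` is strictly convex: the consecutive differences of its increasing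
enumeration are strictly increasing. -/
def IsConvexSet (A : Finset ℤ) : Prop :=
  ∀ a b c : ℤ, ConsecIn A a b → ConsecIn A b c → b - a < c - b

/-- `C(A)`: the maximum cardinality of a strictly convex subset of `A`. -/
noncomputable def convMax (A : Finset ℤ) : ℕ :=
  (A.powerset.filter fun B => IsConvexSet B).sup Finset.card

/-!
Induction on `r`. Put `y = N ^ (1 / r)` and cut `[N]` into `⌊N / L⌋` consecutive blocks of length
`L = ⌈y ^ (r - 1)⌉`. If some block misses `A₁`, the other `r - 1` parts cover an interval of
length `L ≥ y ^ (r - 1)` and the induction hypothesis applies to it. Otherwise one point of `A₁`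
from every third block gives about `y / 6` points whose consecutive gaps lie in `(2L, 4L)`, a
`2`-regular set. For `r = 1` the second case occurs with `L = 1`.
-/

open Finset

lemma IsRegularSet.card_le_regMax {L : ℝ} {A B : Finset ℤ} (hB : IsRegularSet L B) (h : B ⊆ A) :
    #B ≤ regMax L A :=
  le_sup (mem_filter.mpr ⟨mem_powerset.mpr h, hB⟩)

lemma ConsecIn.exists_succ_of_strictMono {f : ℕ → ℤ} (hf : StrictMono f) {t : ℕ} {a b : ℤ}
    (h : ConsecIn ((range t).image f) a b) : ∃ i, i + 1 < t ∧ a = f i ∧ b = f (i + 1) := by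
  obtain ⟨ha, hb, hab, hbetween⟩ := h
  obtain ⟨i, -, rfl⟩ := mem_image.mp ha
  obtain ⟨j, hj, rfl⟩ := mem_image.mp hb
  have hij : i < j := hf.lt_iff_lt.mp hab
  have hji : j = i + 1 := by
    by_contra hne
    have hi : i + 1 < t := by have := mem_range.mp hj; omega
    rcases hbetween (f (i + 1)) (mem_image_of_mem f (mem_range.mpr hi)) with h | h
    · exact (hf (Nat.lt_succ_self i)).not_ge h
    · exact (hf (show i + 1 < j by omega)).not_ge h
  subst hji
  exact ⟨i, mem_range.mp hj, rfl, rfl⟩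

lemma le_regMax_of_gaps {L X : ℝ} (hX : 0 < X) {f : ℕ → ℤ}
    (hgap : ∀ i, X ≤ (f (i + 1) : ℝ) - f i ∧ (f (i + 1) : ℝ) - f i ≤ L * X)
    {A : Finset ℤ} {t : ℕ} (hA : ∀ i < t, f i ∈ A) : t ≤ regMax L A := by
  have hf : StrictMono f := strictMono_nat_of_lt_succ fun i => by
    exact_mod_cast sub_pos.mp (hX.trans_le (hgap i).1)
  have hreg : IsRegularSet L ((range t).image f) := by
    refine ⟨X, hX, fun a b hab => ?_⟩
    obtain ⟨i, -, rfl, rfl⟩ := hab.exists_succ_of_strictMono hf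
    exact hgap i
  have hsub : (range t).image f ⊆ A := by
    simpa [image_subset_iff] using hA
  simpa [card_image_of_injective _ hf.injective] using hreg.card_le_regMax hsub

lemma le_regMax_of_forall_inter_Ioc_nonempty {A : Finset ℤ} {a : ℤ} {L M : ℕ} (hL : 0 < L)
    (hmeet : ∀ j < M, (A ∩ Ioc (a + j * L) (a + j * L + L)).Nonempty) :
    (M + 2) / 3 ≤ regMax 2 A := by
  have hpick : ∀ i : ℕ, ∃ x ∈ Ioc (a + (3 * i : ℕ) * L) (a + (3 * i : ℕ) * L + L),
      3 * i < M → x ∈ A := by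
    intro i
    by_cases hi : 3 * i < M
    · obtain ⟨x, hx⟩ := hmeet (3 * i) hi
      exact ⟨x, (mem_inter.mp hx).2, fun _ => (mem_inter.mp hx).1⟩
    · refine ⟨a + (3 * i : ℕ) * L + L, ?_, fun h => absurd h hi⟩
      simp only [mem_Ioc, le_refl, and_true]
      push_cast
      nlinarith
  choose f hfI hfA using hpick
  apply le_regMax_of_gaps (X := 2 * L) (by positivity) (f := f)
  · intro i
    have h₀ := mem_Ioc.mp (hfI i)
    have h₁ := mem_Ioc.mp (hfI (i + 1))
    push_cast at h₀ h₁
    have hlo : 2 * (L : ℤ) ≤ f (i + 1) - f i := by linarith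
    have hhi : f (i + 1) - f i ≤ 2 * (2 * L) := by linarith
    exact ⟨by exact_mod_cast hlo, by exact_mod_cast hhi⟩
  · exact fun i hi => hfA i (by omega)

lemma div_three_le_regMax_of_Ioc_subset {a : ℤ} {N : ℕ} {A : Finset ℤ} (hA : Ioc a (a + N) ⊆ A) :
    (N : ℝ) / 3 ≤ regMax 2 A := by
  have hmeet : ∀ j < N, (A ∩ Ioc (a + j * (1 : ℕ)) (a + j * (1 : ℕ) + (1 : ℕ))).Nonempty := by
    intro j hj
    refine ⟨a + j + 1, mem_inter.mpr ⟨hA (mem_Ioc.mpr ⟨by omega, by omega⟩), ?_⟩⟩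
    simp only [mem_Ioc, Nat.cast_one, mul_one]
    omega
  have h3 : (N : ℝ) ≤ 3 * ((N + 2) / 3 : ℕ) := by exact_mod_cast (by omega : N ≤ 3 * ((N + 2) / 3))
  have h4 : (((N + 2) / 3 : ℕ) : ℝ) ≤ regMax 2 A := by
    exact_mod_cast le_regMax_of_forall_inter_Ioc_nonempty one_pos hmeet
  linarith

lemma three_pow_succ_le_rpow {r N : ℕ} (hr : 0 < r) (hN : 3 ^ (r ^ 2 + r) ≤ N) :
    (3 : ℝ) ^ (r + 1) ≤ (N : ℝ) ^ ((1 : ℝ) / r) := by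
  have hroot : ((N : ℝ) ^ ((1 : ℝ) / r)) ^ r = N := by
    rw [one_div, Real.rpow_inv_natCast_pow (by positivity) hr.ne']
  rw [← pow_le_pow_iff_left₀ (by positivity) (by positivity) hr.ne', hroot, ← pow_mul]
  exact_mod_cast (show (r + 1) * r = r ^ 2 + r by ring) ▸ hN

lemma div_three_pow_succ_le_rpow_div {s L : ℕ} (hs : s ≠ 0) {y : ℝ} (hy : 0 ≤ y)
    (hL : y ^ s ≤ L) : y / 3 ^ (s + 1) ≤ (L : ℝ) ^ ((1 : ℝ) / s) / 3 ^ s := by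
  have hroot : y ≤ (L : ℝ) ^ ((1 : ℝ) / s) := by
    calc y = (y ^ s) ^ ((1 : ℝ) / s) := by rw [one_div, Real.pow_rpow_inv_natCast hy hs]
      _ ≤ _ := Real.rpow_le_rpow (by positivity) hL (by positivity)
  exact div_le_div₀ (by positivity) hroot (by positivity)
    (pow_le_pow_right₀ (by norm_num) s.le_succ)

lemma div_three_pow_succ_le_div_div {s N L : ℕ} (hs : s ≠ 0) {y : ℝ} (hy : 6 ≤ y)
    (hN : y ^ (s + 1) = N) (hL0 : 0 < L) (hL : (L : ℝ) < y ^ s + 1) :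
    y / 3 ^ (s + 1) ≤ ((N / L + 2) / 3 : ℕ) := by
  set M := N / L
  have hys : 1 ≤ y ^ s := one_le_pow₀ (by linarith)
  have hNM : (N : ℝ) < (M + 1) * L := by
    exact_mod_cast (show N < (M + 1) * L by rw [add_mul, one_mul]; exact Nat.lt_div_mul_add hL0)
  have hyM : y < 2 * (M + 1) := by
    have : y * y ^ s < 2 * (M + 1) * y ^ s := by
      rw [← pow_succ', hN]
      nlinarith
    exact lt_of_mul_lt_mul_right this (by positivity)
  have h9 : (9 : ℝ) ≤ 3 ^ (s + 1) :=
    (pow_le_pow_right₀ (by norm_num) (by omega : 2 ≤ s + 1)).trans_eq' (by norm_num)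
  have hM3 : (M : ℝ) ≤ 3 * ((M + 2) / 3 : ℕ) := by exact_mod_cast (by omega : M ≤ 3 * ((M + 2) / 3))
  calc y / 3 ^ (s + 1) ≤ y / 9 := div_le_div_of_nonneg_left (by linarith) (by norm_num) h9
    _ ≤ _ := by linarith

lemma subset_biUnion_succ {α : Type*} [DecidableEq α] {n : ℕ} {A : Fin (n + 1) → Finset α}
    {S : Finset α} (hS : S ⊆ univ.biUnion A) (h0 : Disjoint (A 0) S) :
    S ⊆ univ.biUnion fun k : Fin n => A k.succ := by
  intro x hx
  obtain ⟨i, -, hi⟩ := mem_biUnion.mp (hS hx)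
  induction i using Fin.cases with
  | zero => exact absurd hx (disjoint_left.mp h0 hi)
  | succ k => exact mem_biUnion.mpr ⟨k, mem_univ _, hi⟩

lemma three_pow_sq_add_self_le {s L : ℕ} {y : ℝ} (hy : (3 : ℝ) ^ (s + 2) ≤ y)
    (hL : y ^ s ≤ L) : 3 ^ (s ^ 2 + s) ≤ L := by
  have : (3 : ℝ) ^ (s ^ 2 + s) ≤ L := calc
    (3 : ℝ) ^ (s ^ 2 + s) ≤ 3 ^ ((s + 2) * s) := pow_le_pow_right₀ (by norm_num) (by nlinarith)
    _ = (3 ^ (s + 2)) ^ s := pow_mul _ _ _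
    _ ≤ y ^ s := pow_le_pow_left₀ (by positivity) hy s
    _ ≤ L := hL
  exact_mod_cast this

lemma Ioc_add_mul_subset_Ioc_of_lt_div {a : ℤ} {j L N : ℕ} (hL : 0 < L) (hj : j < N / L) :
    Ioc (a + j * L) (a + j * L + L) ⊆ Ioc a (a + N) := by
  have hjN : ((j + 1) * L : ℤ) ≤ N := by exact_mod_cast (Nat.le_div_iff_mul_le hL).mp hj
  exact Ioc_subset_Ioc (le_add_of_nonneg_right (by positivity)) (by linarith)

theorem exists_le_regMax_of_Ioc_subset_biUnion {r : ℕ} (hr : 0 < r) (N : ℕ)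
    (hN : 3 ^ (r ^ 2 + r) ≤ N) (a : ℤ) (A : Fin r → Finset ℤ)
    (hcover : Ioc a (a + N) ⊆ univ.biUnion A) :
    ∃ i, (N : ℝ) ^ ((1 : ℝ) / r) / 3 ^ r ≤ regMax 2 (A i) := by
  induction r, hr using Nat.le_induction generalizing N a with
  | base => exact ⟨0, by simpa using div_three_le_regMax_of_Ioc_subset (by simpa using hcover)⟩
  | succ s hs ih =>
    set y := (N : ℝ) ^ ((1 : ℝ) / (s + 1 : ℕ))
    have hy3 : (3 : ℝ) ^ (s + 1 + 1) ≤ y := three_pow_succ_le_rpow (Nat.succ_pos s) hN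
    have hyN : y ^ (s + 1) = N := by
      simp only [y, one_div]
      exact Real.rpow_inv_natCast_pow (by positivity) (Nat.succ_ne_zero s)
    have hy0 : 0 < y := lt_of_lt_of_le (by positivity) hy3
    have hs0 : s ≠ 0 := by omega
    set L := ⌈y ^ s⌉₊
    have hyL : y ^ s ≤ L := Nat.le_ceil _
    have hL0 : 0 < L := Nat.ceil_pos.mpr (pow_pos hy0 s)
    by_cases hmeet : ∀ j < N / L, (A 0 ∩ Ioc (a + j * L) (a + j * L + L)).Nonempty
    · have h6 : (6 : ℝ) ≤ y := calc
        (6 : ℝ) ≤ 3 ^ 2 := by norm_num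
        _ ≤ 3 ^ (s + 1 + 1) := pow_le_pow_right₀ (by norm_num) (by omega)
        _ ≤ y := hy3
      refine ⟨0, (div_three_pow_succ_le_div_div hs0 h6 hyN hL0
        (Nat.ceil_lt_add_one (by positivity))).trans ?_⟩
      exact_mod_cast le_regMax_of_forall_inter_Ioc_nonempty hL0 hmeet
    · push Not at hmeet
      obtain ⟨j, hj, hempty⟩ := hmeet
      have hblock := (Ioc_add_mul_subset_Ioc_of_lt_div (a := a) hL0 hj).trans hcover
      obtain ⟨k, hk⟩ := ih L (three_pow_sq_add_self_le hy3 hyL) (a + j * L) _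
        (subset_biUnion_succ hblock (disjoint_iff_inter_eq_empty.mpr hempty))
      exact ⟨k.succ, (div_three_pow_succ_le_rpow_div hs0 (by positivity) hyL).trans hk⟩

theorem stmt3_general (r N : ℕ) (hr : 0 < r) (hN : 3 ^ (r ^ 2 + r) ≤ N)
    (A : Fin r → Finset ℤ)
    (hcover : Finset.univ.biUnion A = Finset.Icc (1 : ℤ) (N : ℤ)) :
    ∃ i, (N : ℝ) ^ ((1 : ℝ) / r) / 3 ^ r ≤ (regMax 2 (A i) : ℝ) :=
  exists_le_regMax_of_Ioc_subset_biUnion hr N hN 0 A (by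
    rw [hcover, zero_add, ← Finset.Icc_add_one_left_eq_Ioc, zero_add])

/-- If `N ≥ 3^(r² + r)` and `{1, …, N}` is partitioned into `r` parts, then some
part satisfies `R_2(A_i) ≥ N^(1/r) / 3^r`. -/
theorem stmt3 (r N : ℕ) (hr : 0 < r) (hN : 3 ^ (r ^ 2 + r) ≤ N)
    (A : Fin r → Finset ℤ)
    (hdisj : ∀ i j, i ≠ j → Disjoint (A i) (A j))
    (hcover : Finset.univ.biUnion A = Finset.Icc (1 : ℤ) (N : ℤ)) :
    ∃ i, (N : ℝ) ^ ((1 : ℝ) / r) / 3 ^ r ≤ (regMax 2 (A i) : ℝ) :=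
  stmt3_general r N hr hN A hcover
end

section
/- Let A be a finite set of integers. Then C(A) ≥ ⌊R_2(A)^(1/2) / 4⌋. -/
open scoped Classical Pointwise

/-!
Let `B ⊆ A` be a largest `2`-regular subset, with consecutive gaps in `[X, 2X]`. Its span is at
least `(|B| - 1) X`, and since no gap exceeds `2X`, every half-open window of length `2X` inside
the span meets `B`. Choosing `b_k ∈ B` with `b_k - min B ∈ (3k²X, (3k² + 2)X]` for `k < s`, the
gaps `b_{k+1} - b_k` lie in `((6k + 1)X, (6k + 5)X)`, so they strictly increase (for `L`-regular
`B`, replace `3` by `L + 1` and `2X` by `LX`). This needs only `3s² ≤ |B|`, which `s ≤ √|B| / 4`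
guarantees.
-/

open Finset

lemma ConsecIn.insert_of_forall_lt {B : Finset ℤ} {x a b : ℤ} (hx : ∀ y ∈ B, y < x)
    (h : ConsecIn B a b) : ConsecIn (insert x B) a b := by
  obtain ⟨ha, hb, hab, hmax⟩ := h
  refine ⟨mem_insert_of_mem ha, mem_insert_of_mem hb, hab, fun c hc => ?_⟩
  rcases mem_insert.1 hc with rfl | hc
  · exact Or.inr (hx b hb).le
  · exact hmax c hc

lemma consecIn_insert_max' {B : Finset ℤ} (hB : B.Nonempty) {x : ℤ} (hx : ∀ y ∈ B, y < x) :
    ConsecIn (insert x B) (B.max' hB) x := by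
  refine ⟨mem_insert_of_mem (B.max'_mem hB), mem_insert_self x B, hx _ (B.max'_mem hB),
    fun c hc => ?_⟩
  rcases mem_insert.1 hc with rfl | hc
  · exact Or.inr le_rfl
  · exact Or.inl (B.le_max' c hc)

lemma ConsecIn.exists_of_image_range {u : ℕ → ℤ} {s : ℕ} (hu : StrictMonoOn u (Set.Iio s))
    {a b : ℤ} (h : ConsecIn ((range s).image u) a b) :
    ∃ k, k + 1 < s ∧ a = u k ∧ b = u (k + 1) := by
  obtain ⟨ha, hb, hab, hmax⟩ := h
  obtain ⟨k, hk, rfl⟩ := mem_image.1 ha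
  obtain ⟨l, hl, rfl⟩ := mem_image.1 hb
  rw [mem_range] at hk hl
  have hkl : k < l := (hu.lt_iff_lt hk hl).1 hab
  obtain rfl : l = k + 1 := by
    by_contra hne
    have hk1 : k + 1 < s := by omega
    rcases hmax (u (k + 1)) (mem_image_of_mem u (mem_range.2 hk1)) with h | h
    · exact (hu.lt_iff_lt hk hk1).2 k.lt_succ_self |>.not_ge h
    · exact (hu.lt_iff_lt hk1 hl).2 (by omega) |>.not_ge h
  exact ⟨k, hl, rfl, rfl⟩

lemma isConvexSet_image_range {u : ℕ → ℤ} {s : ℕ} (hu : StrictMonoOn u (Set.Iio s))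
    (hgap : ∀ k, k + 2 < s → u (k + 1) - u k < u (k + 2) - u (k + 1)) :
    IsConvexSet ((range s).image u) := by
  intro a b c hab hbc
  obtain ⟨k, hk, rfl, rfl⟩ := hab.exists_of_image_range hu
  obtain ⟨l, hl, hkl, rfl⟩ := hbc.exists_of_image_range hu
  obtain rfl : l = k + 1 := hu.injOn (by simp; omega) (by simp; omega) hkl.symm
  exact hgap k hl

lemma card_le_convMax {A C : Finset ℤ} (hCA : C ⊆ A) (hC : IsConvexSet C) : #C ≤ convMax A :=
  le_sup (mem_filter.2 ⟨mem_powerset.2 hCA, hC⟩)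

lemma exists_isRegularSet_card_eq_regMax (L : ℝ) (A : Finset ℤ) :
    ∃ B ⊆ A, IsRegularSet L B ∧ #B = regMax L A := by
  have hne : (A.powerset.filter fun B => IsRegularSet L B).Nonempty :=
    ⟨∅, mem_filter.2 ⟨empty_mem_powerset A, 1, one_pos, fun a _ h => absurd h.1 (notMem_empty a)⟩⟩
  obtain ⟨B, hB, hcard⟩ := exists_mem_eq_sup _ hne card
  obtain ⟨hBA, hreg⟩ := mem_filter.1 hB
  exact ⟨B, mem_powerset.1 hBA, hreg, hcard.symm⟩

lemma exists_sub_ge_of_le_gap {X : ℝ} {B : Finset ℤ} (hB : B.Nonempty)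
    (hgap : ∀ a b, ConsecIn B a b → X ≤ (b : ℝ) - a) :
    ∃ a ∈ B, ∃ c ∈ B, ((#B : ℝ) - 1) * X ≤ c - a := by
  induction B using Finset.induction_on_max with
  | empty => exact absurd hB not_nonempty_empty
  | insert x B hx ih =>
    rcases B.eq_empty_or_nonempty with rfl | hBne
    · exact ⟨x, mem_insert_self x ∅, x, mem_insert_self x ∅, by simp⟩
    obtain ⟨a, ha, c, hc, hac⟩ := ih hBne fun a b h => hgap a b (h.insert_of_forall_lt hx)
    have hlast := hgap _ _ (consecIn_insert_max' hBne hx)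
    have hcmax : (c : ℝ) ≤ B.max' hBne := by exact_mod_cast B.le_max' c hc
    refine ⟨a, mem_insert_of_mem ha, x, mem_insert_self x B, ?_⟩
    rw [card_insert_of_notMem fun h => (hx x h).false]
    push_cast
    linarith

/-- Take the least element above `t`; its predecessor lies at or below `t`. -/
lemma exists_mem_Ioc_of_gap_le {δ t : ℝ} {B : Finset ℤ}
    (hgap : ∀ a b, ConsecIn B a b → (b : ℝ) - a ≤ δ) {a c : ℤ} (ha : a ∈ B) (hc : c ∈ B)
    (hat : (a : ℝ) ≤ t) (htc : t < c) : ∃ b ∈ B, t < b ∧ (b : ℝ) ≤ t + δ := by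
  set S := B.filter fun x : ℤ => t < x
  have hS : S.Nonempty := ⟨c, mem_filter.2 ⟨hc, htc⟩⟩
  obtain ⟨hbB, htb⟩ := mem_filter.1 (S.min'_mem hS)
  set b := S.min' hS
  set P := B.filter (· < b)
  have hP : P.Nonempty := ⟨a, mem_filter.2 ⟨ha, by exact_mod_cast hat.trans_lt htb⟩⟩
  obtain ⟨hpB, hpb⟩ := mem_filter.1 (P.max'_mem hP)
  set p := P.max' hP
  have hpb_consec : ConsecIn B p b := by
    refine ⟨hpB, hbB, hpb, fun x hx => ?_⟩
    rcases lt_or_ge x b with h | h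
    · exact Or.inl (P.le_max' x (mem_filter.2 ⟨hx, h⟩))
    · exact Or.inr h
  have hpt : (p : ℝ) ≤ t := by
    by_contra! h
    exact (S.min'_le p (mem_filter.2 ⟨hpB, h⟩)).not_gt hpb
  exact ⟨b, hbB, htb, by linarith [hgap p b hpb_consec]⟩

section NearSquares

variable {L X : ℝ} {a : ℤ} {w : ℕ → ℤ} {s : ℕ}

lemma strictMonoOn_of_near_squares (hL : 0 ≤ L) (hX : 0 < X)
    (hw : ∀ k < s,
      (L + 1) * k ^ 2 * X < (w k : ℝ) - a ∧ (w k : ℝ) - a ≤ ((L + 1) * k ^ 2 + L) * X) :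
    StrictMonoOn w (Set.Iio s) := by
  intro k hk l hl hkl
  have hkl' : (k : ℝ) + 1 ≤ l := by exact_mod_cast hkl
  have hcoef : (L + 1) * k ^ 2 + L < (L + 1) * l ^ 2 := by
    nlinarith [mul_le_mul_of_nonneg_left hkl' (by linarith : (0 : ℝ) ≤ L + 1),
      (Nat.cast_nonneg k : (0 : ℝ) ≤ k)]
  have hk_hi := (hw k hk).2
  have hl_lo := (hw l hl).1
  have hreal : (w k : ℝ) < w l := by linarith [mul_lt_mul_of_pos_right hcoef hX]
  exact_mod_cast hreal

lemma sub_lt_sub_of_near_squares (hX : 0 < X)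
    (hw : ∀ k < s,
      (L + 1) * k ^ 2 * X < (w k : ℝ) - a ∧ (w k : ℝ) - a ≤ ((L + 1) * k ^ 2 + L) * X)
    {k : ℕ} (hk : k + 2 < s) : w (k + 1) - w k < w (k + 2) - w (k + 1) := by
  have h0 := (hw k (by omega)).1
  have h1 := (hw (k + 1) (by omega)).2
  have h2 := (hw (k + 2) (by omega)).1
  push_cast at h1 h2
  have hcoef : ((L + 1) * (2 * k + 1) + L) * X < ((L + 1) * (2 * k + 3) - L) * X :=
    mul_lt_mul_of_pos_right (by linarith) hX
  have hreal : (w (k + 1) : ℝ) - w k < w (k + 2) - w (k + 1) := by linarith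
  exact_mod_cast hreal

end NearSquares

lemma le_convMax_of_isRegularSet {L : ℝ} (hL : 0 < L) {A B : Finset ℤ} {s : ℕ} (hBA : B ⊆ A)
    (hB : IsRegularSet L B) (hs : (L + 1) * s ^ 2 ≤ #B) : s ≤ convMax A := by
  obtain ⟨X, hX, hgap⟩ := hB
  rcases s.eq_zero_or_pos with rfl | hs0
  · exact Nat.zero_le _
  have hs1 : (1 : ℝ) ≤ s := by exact_mod_cast hs0
  have hBne : B.Nonempty := card_pos.1 (by exact_mod_cast (by nlinarith : (0 : ℝ) < #B))
  obtain ⟨a, ha, c, hc, hac⟩ := exists_sub_ge_of_le_gap hBne fun x y h => (hgap x y h).1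
  have hnear : ∀ k < s, ∃ b ∈ B,
      (L + 1) * k ^ 2 * X < (b : ℝ) - a ∧ (b : ℝ) - a ≤ ((L + 1) * k ^ 2 + L) * X := by
    intro k hk
    have hks : (k : ℝ) ^ 2 ≤ (s - 1) ^ 2 := by
      have : (k : ℝ) + 1 ≤ s := by exact_mod_cast hk
      gcongr
      linarith
    have hkB : (L + 1) * k ^ 2 < #B - 1 := by
      nlinarith [mul_le_mul_of_nonneg_left hks (by linarith : (0 : ℝ) ≤ L + 1)]
    obtain ⟨b, hb, hlo, hhi⟩ := exists_mem_Ioc_of_gap_le (fun x y h => (hgap x y h).2) ha hc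
      (t := a + (L + 1) * k ^ 2 * X) (le_add_of_nonneg_right (by positivity)) (by nlinarith)
    exact ⟨b, hb, by linarith, by linarith⟩
  choose! w hwB hw using hnear
  have hmono := strictMonoOn_of_near_squares hL.le hX hw
  have hsub : (range s).image w ⊆ A := by
    intro x hx
    obtain ⟨k, hk, rfl⟩ := mem_image.1 hx
    exact hBA (hwB k (mem_range.1 hk))
  calc s = #((range s).image w) := by
        rw [card_image_of_injOn (by simpa using hmono.injOn), card_range]
    _ ≤ convMax A := card_le_convMax hsub
        (isConvexSet_image_range hmono fun _ hk => sub_lt_sub_of_near_squares hX hw hk)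

/-- For a finite set `A` of integers, `C(A) ≥ ⌊R_2(A)^(1/2) / 4⌋`. -/
theorem stmt6 (A : Finset ℤ) :
    ⌊Real.sqrt (regMax 2 A : ℝ) / 4⌋₊ ≤ convMax A := by
  obtain ⟨B, hBA, hB, hcard⟩ := exists_isRegularSet_card_eq_regMax 2 A
  refine le_convMax_of_isRegularSet two_pos hBA hB ?_
  have hs : (⌊√(#B : ℝ) / 4⌋₊ : ℝ) ≤ √(#B : ℝ) / 4 := Nat.floor_le (by positivity)
  have hsq := Real.sq_sqrt (Nat.cast_nonneg (α := ℝ) #B)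
  rw [← hcard]
  nlinarith [Nat.cast_nonneg (α := ℝ) ⌊√(#B : ℝ) / 4⌋₊]
end

section
/- Let B be a finite set of integers that is 2-regular. Then B contains a strictly convex subset of cardinality at least ⌊|B|^(1/2) / 4⌋. -/
open scoped Classical Pointwise

/-! Let `a₀ = min B`, with gaps in `[X, 2X]`, and pick in `B` the least element `v j` at or above
the threshold `a₀ + 2X j²`. Gaps at most `2X` put `v j` within `2X` of its threshold; the thresholds
have second differences `4X`, which absorbs these errors, so the `v j` are strictly convex. Gaps at
least `X` make `B` span `(|B| - 1) X`, so there is room for `⌊√|B| / 4⌋` thresholds. -/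

theorem exists_consecIn_of_lt {A : Finset ℤ} {a b : ℤ} (ha : a ∈ A) (hb : b ∈ A) (hab : a < b) :
    ∃ p, ConsecIn A p b := by
  have hne : (A.filter (· < b)).Nonempty := ⟨a, Finset.mem_filter.2 ⟨ha, hab⟩⟩
  obtain ⟨hpA, hpb⟩ := Finset.mem_filter.1 ((A.filter (· < b)).max'_mem hne)
  refine ⟨_, hpA, hb, hpb, fun c hc => ?_⟩
  rcases lt_or_ge c b with hcb | hbc
  · exact .inl ((A.filter (· < b)).le_max' c (Finset.mem_filter.2 ⟨hc, hcb⟩))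
  · exact .inr hbc

theorem card_sub_one_mul_le_max'_sub_min' {A : Finset ℤ} {X : ℝ}
    (hgap : ∀ a b, ConsecIn A a b → X ≤ (b : ℝ) - a) (hA : A.Nonempty) :
    ((A.card : ℝ) - 1) * X ≤ A.max' hA - A.min' hA := by
  induction A using Finset.induction_on_max with
  | empty => exact absurd hA Finset.not_nonempty_empty
  | insert b s hlt ih =>
    obtain rfl | hs := s.eq_empty_or_nonempty
    · simp
    have hb : b ∉ s := fun hb => lt_irrefl b (hlt b hb)
    have hmax : (insert b s).max' hA = b := by
      rw [Finset.max'_insert _ _ hs, max_eq_left (hlt _ (s.max'_mem hs)).le]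
    have hmin : (insert b s).min' hA = s.min' hs := by
      rw [Finset.min'_insert _ _ hs, min_eq_right (hlt _ (s.min'_mem hs)).le]
    have hcons : ConsecIn (insert b s) (s.max' hs) b := by
      refine ⟨Finset.mem_insert_of_mem (s.max'_mem hs), Finset.mem_insert_self b s,
        hlt _ (s.max'_mem hs), fun c hc => ?_⟩
      rcases Finset.mem_insert.1 hc with rfl | hc
      · exact .inr le_rfl
      · exact .inl (s.le_max' c hc)
    have hs_gap : ∀ a c, ConsecIn s a c → X ≤ (c : ℝ) - a := fun a c ⟨ha, hc, hac, hbetween⟩ =>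
      hgap a c ⟨Finset.mem_insert_of_mem ha, Finset.mem_insert_of_mem hc, hac, fun d hd => by
        rcases Finset.mem_insert.1 hd with rfl | hd
        · exact .inr (hlt c hc).le
        · exact hbetween d hd⟩
    have := ih hs_gap hs
    rw [Finset.card_insert_of_notMem hb, hmax, hmin]
    push_cast
    linarith [hgap _ _ hcons]

theorem exists_mem_Ico_of_consecIn_sub_le {A : Finset ℤ} {G t : ℝ} (hG : 0 < G)
    (hgap : ∀ a b, ConsecIn A a b → (b : ℝ) - a ≤ G)
    (hlo : ∃ a ∈ A, (a : ℝ) ≤ t) (hhi : ∃ b ∈ A, t ≤ b) :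
    ∃ b ∈ A, (b : ℝ) ∈ Set.Ico t (t + G) := by
  obtain ⟨a, ha, hat⟩ := hlo
  set U := A.filter (fun b : ℤ => t ≤ b)
  have hU : U.Nonempty := by
    obtain ⟨b, hb, htb⟩ := hhi
    exact ⟨b, Finset.mem_filter.2 ⟨hb, htb⟩⟩
  obtain ⟨hbA, htb⟩ := Finset.mem_filter.1 (U.min'_mem hU)
  refine ⟨_, hbA, htb, ?_⟩
  rcases (Int.cast_le (R := ℝ)).1 (hat.trans htb) |>.lt_or_eq with hlt | heq
  · obtain ⟨p, hp⟩ := exists_consecIn_of_lt ha hbA hlt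
    have hpt : (p : ℝ) < t := by
      by_contra! htp
      exact absurd (U.min'_le p (Finset.mem_filter.2 ⟨hp.1, htp⟩)) (not_le.2 hp.2.2.1)
    linarith [hgap _ _ hp]
  · have : (a : ℝ) = t := le_antisymm hat (heq ▸ htb)
    rw [← heq, this]
    linarith

theorem succ_eq_of_consecIn_image_range {v : ℕ → ℤ} {k i j : ℕ}
    (hv : StrictMonoOn v (Set.Iio k)) (hi : i < k) (hj : j < k)
    (hcons : ConsecIn ((Finset.range k).image v) (v i) (v j)) : j = i + 1 := by
  have hij : i < j := (hv.lt_iff_lt hi hj).1 hcons.2.2.1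
  by_contra hne
  have hmid : v (i + 1) ∈ (Finset.range k).image v :=
    Finset.mem_image_of_mem v (Finset.mem_range.2 (by omega))
  rcases hcons.2.2.2 _ hmid with h | h
  · exact absurd h (not_le.2 (hv (Set.mem_Iio.2 hi) (Set.mem_Iio.2 (by omega)) (by omega)))
  · exact absurd h (not_le.2 (hv (Set.mem_Iio.2 (by omega)) (Set.mem_Iio.2 hj) (by omega)))

theorem isConvexSet_image_range_s7 {v : ℕ → ℤ} {k : ℕ} (hv : StrictMonoOn v (Set.Iio k))
    (hdiff : ∀ j, j + 2 < k → v (j + 1) - v j < v (j + 2) - v (j + 1)) :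
    IsConvexSet ((Finset.range k).image v) := by
  intro a b c hab hbc
  obtain ⟨i, hi, rfl⟩ := Finset.mem_image.1 hab.1
  obtain ⟨j, hj, rfl⟩ := Finset.mem_image.1 hab.2.1
  obtain ⟨m, hm, rfl⟩ := Finset.mem_image.1 hbc.2.1
  rw [Finset.mem_range] at hi hj hm
  obtain rfl := succ_eq_of_consecIn_image_range hv hi hj hab
  obtain rfl := succ_eq_of_consecIn_image_range hv hj hm hbc
  exact hdiff i hm

theorem isConvexSet_image_range_of_mem_Ico_sq {v : ℕ → ℤ} {a G : ℝ} {k : ℕ}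
    (hv : ∀ j < k, (v j : ℝ) ∈ Set.Ico (a + G * j ^ 2) (a + G * j ^ 2 + G)) :
    IsConvexSet ((Finset.range k).image v) ∧ ((Finset.range k).image v).card = k := by
  have hmono : StrictMonoOn v (Set.Iio k) := by
    intro i hi j hj hij
    obtain ⟨-, hi_lt⟩ := hv i hi
    obtain ⟨hj_le, hj_lt⟩ := hv j hj
    have hsq : (i : ℝ) ^ 2 + 1 ≤ (j : ℝ) ^ 2 := by
      have : (i : ℝ) + 1 ≤ j := by exact_mod_cast hij
      nlinarith
    have : (v i : ℝ) < v j := by nlinarith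
    exact_mod_cast this
  refine ⟨isConvexSet_image_range_s7 hmono fun j hj => ?_, ?_⟩
  · obtain ⟨h0, -⟩ := hv j (by omega)
    obtain ⟨h1, h1'⟩ := hv (j + 1) (by omega)
    obtain ⟨h2, -⟩ := hv (j + 2) hj
    push_cast at h1 h1' h2
    have : ((v (j + 1) - v j : ℤ) : ℝ) < ((v (j + 2) - v (j + 1) : ℤ) : ℝ) := by
      push_cast; nlinarith
    exact_mod_cast this
  · rw [Finset.card_image_of_injOn (hmono.injOn.mono (by simp)), Finset.card_range]

theorem sixteen_mul_floor_sqrt_div_four_sq_le (n : ℕ) : 16 * ⌊√(n : ℝ) / 4⌋₊ ^ 2 ≤ n := by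
  have h4 : 4 * (⌊√(n : ℝ) / 4⌋₊ : ℝ) ≤ √(n : ℝ) := by
    linarith [Nat.floor_le (by positivity : 0 ≤ √(n : ℝ) / 4)]
  have := pow_le_pow_left₀ (by positivity) h4 2
  rw [Real.sq_sqrt (by positivity)] at this
  exact_mod_cast (by linarith : (16 * ⌊√(n : ℝ) / 4⌋₊ ^ 2 : ℝ) ≤ n)

/-- A `2`-regular finite set `B` of integers contains a strictly convex subset of
cardinality at least `⌊|B|^(1/2) / 4⌋`. -/
theorem stmt7 (B : Finset ℤ) (hB : IsRegularSet 2 B) :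
    ∃ B' ⊆ B, IsConvexSet B' ∧ ⌊Real.sqrt (B.card : ℝ) / 4⌋₊ ≤ B'.card := by
  obtain ⟨X, hX, hgap⟩ := hB
  obtain rfl | hne := B.eq_empty_or_nonempty
  · exact ⟨∅, subset_rfl, fun _ _ _ h => absurd h.1 (Finset.notMem_empty _), by simp⟩
  set k := ⌊√(B.card : ℝ) / 4⌋₊
  have hspan := card_sub_one_mul_le_max'_sub_min' (fun a b h => (hgap a b h).1) hne
  have hsel : ∀ j < k, ∃ b ∈ B,
      (b : ℝ) ∈ Set.Ico (B.min' hne + 2 * X * j ^ 2) (B.min' hne + 2 * X * j ^ 2 + 2 * X) := by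
    intro j hj
    have hjn : 2 * j ^ 2 + 1 ≤ B.card := by
      nlinarith [sixteen_mul_floor_sqrt_div_four_sq_le B.card]
    have hjn' : 2 * (j : ℝ) ^ 2 ≤ B.card - 1 := by
      have : (2 * j ^ 2 + 1 : ℝ) ≤ B.card := by exact_mod_cast hjn
      linarith
    exact exists_mem_Ico_of_consecIn_sub_le (by positivity) (fun a b h => (hgap a b h).2)
      ⟨_, B.min'_mem hne, by nlinarith⟩ ⟨_, B.max'_mem hne, by nlinarith⟩
  choose! v hvB hv using hsel
  obtain ⟨hconv, hcard⟩ := isConvexSet_image_range_of_mem_Ico_sq hv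
  exact ⟨_, Finset.image_subset_iff.2 fun j hj => hvB j (Finset.mem_range.1 hj), hconv, hcard.ge⟩
end

section
/- For any positive integer r and any bound N_0, there exists an integer N ≥ N_0 and a partition [N] = A_1 ∪ ⋯ ∪ A_r of [N] into r parts such that max{R_2(A_i) : 1 ≤ i ≤ r} ≤ 2·(r−1)!·N^(1/r) and max{C(A_i) : 1 ≤ i ≤ r} ≤ r!·N^(1/r). -/
open scoped Classical Pointwise

/-!
Colour `[0, b ^ r)` recursively: cut it into `b` blocks of length `b ^ (r - 1)`, colour the
`k`-th block by a translate of the `(r - 1)`-colouring, renumbered so that colour `k mod r` is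
skipped. Every colour class then misses one block in each run of `r` consecutive blocks. A subset
of a class whose gaps never exceed the block length is trapped in `r - 1` consecutive blocks, where
the bound of the previous level applies; beyond the first larger gap, a `2`-regular set has at most
two points per block, and a convex set (whose gaps increase) at most one. With `N = b ^ r` this
gives `R₂ ≤ 2 (r - 1)! b` and `C ≤ r! b`.
-/

open Finset

lemma mem_vadd_finset_iff_sub_mem {c x : ℤ} {B : Finset ℤ} :
    x ∈ c +ᵥ B ↔ x - c ∈ B := by
  rw [← neg_neg c, mem_neg_vadd_finset_iff, vadd_eq_add, neg_neg, sub_eq_neg_add]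

namespace ConsecIn

variable {B : Finset ℤ} {a b : ℤ}

lemma right_unique {b' : ℤ} (h : ConsecIn B a b) (h' : ConsecIn B a b') : b = b' := by
  rcases h.2.2.2 b' h'.2.1 with h₁ | h₁ <;> rcases h'.2.2.2 b h.2.1 with h₂ | h₂ <;>
    linarith [h.2.2.1, h'.2.2.1]

lemma of_filter {p : ℤ → Prop} [DecidablePred p] (hp : {x | p x}.OrdConnected)
    (h : ConsecIn (B.filter p) a b) : ConsecIn B a b := by
  obtain ⟨ha, hb, hab, hB⟩ := h
  rw [mem_filter] at ha hb
  refine ⟨ha.1, hb.1, hab, fun c hc => ?_⟩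
  by_contra! hac
  have := hB c (mem_filter.2 ⟨hc, hp.out ha.2 hb.2 ⟨hac.1.le, hac.2.le⟩⟩)
  omega

lemma of_vadd {c : ℤ} (h : ConsecIn (c +ᵥ B) a b) : ConsecIn B (a - c) (b - c) := by
  obtain ⟨ha, hb, hab, hB⟩ := h
  rw [mem_vadd_finset_iff_sub_mem] at ha hb
  refine ⟨ha, hb, by omega, fun e he => ?_⟩
  have := hB (e + c) (by rwa [mem_vadd_finset_iff_sub_mem, add_sub_cancel_right])
  omega

lemma of_insert_of_lt {c : ℤ} (hc : ∀ x ∈ B, x < c) (h : ConsecIn B a b) :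
    ConsecIn (insert c B) a b := by
  obtain ⟨ha, hb, hab, hB⟩ := h
  refine ⟨mem_insert_of_mem ha, mem_insert_of_mem hb, hab, fun e he => ?_⟩
  rcases mem_insert.1 he with rfl | he
  · exact Or.inr (hc b hb).le
  · exact hB e he

lemma max'_insert {c : ℤ} (hc : ∀ x ∈ B, x < c) (hne : B.Nonempty) :
    ConsecIn (insert c B) (B.max' hne) c := by
  refine ⟨mem_insert_of_mem (B.max'_mem hne), mem_insert_self c B, hc _ (B.max'_mem hne),
    fun e he => ?_⟩
  rcases mem_insert.1 he with rfl | he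
  · exact Or.inr le_rfl
  · exact Or.inl (B.le_max' e he)

end ConsecIn

lemma exists_consecIn_le_of_lt {B : Finset ℤ} {x y : ℤ} (hx : x ∈ B) (hy : y ∈ B)
    (hxy : x < y) :
    ∃ z, ConsecIn B x z ∧ z ≤ y := by
  have hy' : y ∈ B.filter (x < ·) := mem_filter.2 ⟨hy, hxy⟩
  obtain ⟨hzB, hxz⟩ := mem_filter.1 ((B.filter (x < ·)).min'_mem ⟨y, hy'⟩)
  refine ⟨_, ⟨hx, hzB, hxz, fun c hc => ?_⟩, min'_le _ _ hy'⟩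
  by_cases hxc : x < c
  · exact Or.inr (min'_le _ _ (mem_filter.2 ⟨hc, hxc⟩))
  · exact Or.inl (not_lt.1 hxc)

lemma card_sub_one_mul_le_of_le_sub {X : ℝ} (B : Finset ℤ) :
    ∀ {u v : ℤ}, B.Nonempty → B ⊆ Icc u v → (∀ a b, ConsecIn B a b → X ≤ b - a) →
      ((#B : ℝ) - 1) * X ≤ v - u := by
  induction B using Finset.induction_on_max with
  | empty => simp
  | insert c B hc ih =>
    intro u v _ hsub hgap
    have hcuv := mem_Icc.1 (hsub (mem_insert_self c B))
    rw [card_insert_of_notMem fun h => (hc c h).false]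
    rcases B.eq_empty_or_nonempty with rfl | hne
    · simp only [card_empty]
      push_cast
      linarith [(Int.cast_le (R := ℝ)).2 (hcuv.1.trans hcuv.2)]
    · have hlast := hgap _ _ (ConsecIn.max'_insert hc hne)
      have hinit := ih hne (u := u) (v := B.max' hne)
        (fun x hx => mem_Icc.2 ⟨(mem_Icc.1 (hsub (mem_insert_of_mem hx))).1, B.le_max' x hx⟩)
        (fun a b h => hgap a b (h.of_insert_of_lt hc))
      have : ((c : ℤ) : ℝ) ≤ v := by exact_mod_cast hcuv.2
      push_cast
      linarith

noncomputable def maxCard (P : Finset ℤ → Prop) (A : Finset ℤ) : ℕ :=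
  (A.powerset.filter P).sup Finset.card

lemma regMax_eq_maxCard (L : ℝ) (A : Finset ℤ) : regMax L A = maxCard (IsRegularSet L) A := rfl

lemma convMax_eq_maxCard (A : Finset ℤ) : convMax A = maxCard IsConvexSet A := rfl

section maxCard

variable {P : Finset ℤ → Prop} {A B : Finset ℤ} {m : ℕ}

lemma maxCard_le_iff : maxCard P A ≤ m ↔ ∀ B ⊆ A, P B → #B ≤ m := by
  simp [maxCard, Finset.sup_le_iff]

lemma card_le_maxCard (hBA : B ⊆ A) (hB : P B) : #B ≤ maxCard P A :=
  le_sup (mem_filter.2 ⟨mem_powerset.2 hBA, hB⟩)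

lemma maxCard_le_card : maxCard P A ≤ #A :=
  maxCard_le_iff.2 fun _ hB _ => card_le_card hB

lemma maxCard_vadd_le (hP : ∀ (c : ℤ) B, P B → P (c +ᵥ B)) (c : ℤ) :
    maxCard P (c +ᵥ A) ≤ maxCard P A :=
  maxCard_le_iff.2 fun B hB hPB => by
    rw [← card_vadd_finset (-c) B]
    exact card_le_maxCard (subset_vadd_finset_iff.1 hB) (hP _ B hPB)

end maxCard

structure IsShiftHereditary (P : Finset ℤ → Prop) : Prop where
  vadd (c : ℤ) {B : Finset ℤ} : P B → P (c +ᵥ B)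
  filter {p : ℤ → Prop} [DecidablePred p] :
    {x | p x}.OrdConnected → ∀ {B : Finset ℤ}, P B → P (B.filter p)

lemma isShiftHereditary_isRegularSet (L : ℝ) : IsShiftHereditary (IsRegularSet L) where
  vadd _ _ := fun ⟨X, hX, hg⟩ => ⟨X, hX, fun _ _ h => by simpa using hg _ _ h.of_vadd⟩
  filter hp _ := fun ⟨X, hX, hg⟩ => ⟨X, hX, fun a b h => hg a b (h.of_filter hp)⟩

lemma isShiftHereditary_isConvexSet : IsShiftHereditary IsConvexSet where
  vadd _ _ hB _ _ _ h₁ h₂ := by have := hB _ _ _ h₁.of_vadd h₂.of_vadd; omega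
  filter hp _ hB a b d h₁ h₂ := hB a b d (h₁.of_filter hp) (h₂.of_filter hp)

namespace IsConvexSet

variable {B : Finset ℤ}

lemma sub_le_sub_of_le (hB : IsConvexSet B) {a b c d : ℤ} (hab : ConsecIn B a b)
    (hcd : ConsecIn B c d) (hac : a ≤ c) : b - a ≤ d - c := by
  obtain ⟨n, hn⟩ : ∃ n, (c - a).toNat = n := ⟨_, rfl⟩
  induction n using Nat.strong_induction_on generalizing a b with
  | _ n ih =>
    rcases hac.eq_or_lt with rfl | hac
    · rw [hab.right_unique hcd]
    · have hbc : b ≤ c := (hab.2.2.2 c hcd.1).resolve_left (by omega)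
      obtain ⟨e, hbe, -⟩ := exists_consecIn_le_of_lt hab.2.1 hcd.2.1 (by linarith [hcd.2.2.1])
      have := hB a b e hab hbe
      have := ih (c - b).toNat (by have := hab.2.2.1; omega) hbe hbc rfl
      omega

/-- Since the gaps of a convex set increase, the gaps `≤ g` all precede the gaps `> g`. -/
lemma exists_split (hB : IsConvexSet B) (g : ℤ) : ∃ t : ℤ,
    (∀ a b, ConsecIn (B.filter (· ≤ t)) a b → b - a ≤ g) ∧
    (∀ a b, ConsecIn (B.filter (t ≤ ·)) a b → g < b - a) := by
  set S := B.filter fun x => ∃ y, ConsecIn B x y ∧ g < y - x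
  rcases S.eq_empty_or_nonempty with hS | hS
  · obtain ⟨t, ht⟩ := B.bddAbove
    refine ⟨t, fun a b h => ?_, fun a b h => ?_⟩
    · by_contra! hg
      exact filter_eq_empty_iff.1 hS (mem_filter.1 h.1).1
        ⟨b, h.of_filter Set.ordConnected_Iic, hg⟩
    · obtain ⟨ha, hb, hab, -⟩ := h
      have := ht (mem_filter.1 hb).1
      have := (mem_filter.1 ha).2
      omega
  · obtain ⟨-, y, hty, hgy⟩ := mem_filter.1 (S.min'_mem hS)
    refine ⟨S.min' hS, fun a b h => ?_, fun a b h => ?_⟩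
    · by_contra! hg
      have hab := h.of_filter Set.ordConnected_Iic
      have := S.min'_le a (mem_filter.2 ⟨hab.1, b, hab, hg⟩)
      have := (mem_filter.1 h.2.1).2
      have := h.2.2.1
      omega
    · have := hB.sub_le_sub_of_le hty (h.of_filter Set.ordConnected_Ici) (mem_filter.1 h.1).2
      omega

end IsConvexSet

section Blocks

variable {B : Finset ℤ} {M : ℤ}

lemma ediv_eq_iff_mul_le_and_lt (hM : 0 < M) {x k : ℤ} :
    x / M = k ↔ k * M ≤ x ∧ x < (k + 1) * M := by
  rw [← Int.le_ediv_iff_mul_le hM, ← Int.ediv_lt_iff_lt_mul hM]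
  omega

lemma ordConnected_setOf_ediv_eq (hM : 0 < M) (k : ℤ) : {x : ℤ | x / M = k}.OrdConnected :=
  Set.ordConnected_singleton.preimage_mono fun _ _ h => Int.ediv_le_ediv hM h

lemma exists_mem_ediv_eq_of_sub_le (hM : 0 < M) (hgap : ∀ a b, ConsecIn B a b → b - a ≤ M)
    {x y k : ℤ} (hx : x ∈ B) (hy : y ∈ B) (hxk : x / M ≤ k) (hky : k ≤ y / M) :
    ∃ z ∈ B, z / M = k := by
  rcases hxk.eq_or_lt with rfl | hxk
  · exact ⟨x, hx, rfl⟩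
  rw [Int.ediv_lt_iff_lt_mul hM] at hxk
  rw [Int.le_ediv_iff_mul_le hM] at hky
  have hx' : x ∈ B.filter (· < k * M) := mem_filter.2 ⟨hx, hxk⟩
  obtain ⟨hwB, hwk⟩ := mem_filter.1 ((B.filter (· < k * M)).max'_mem ⟨x, hx'⟩)
  obtain ⟨z, hz, -⟩ := exists_consecIn_le_of_lt hwB hy (hwk.trans_le hky)
  have hkz : k * M ≤ z := by
    by_contra! h
    have := (B.filter (· < k * M)).le_max' z (mem_filter.2 ⟨hz.2.1, h⟩)
    linarith [hz.2.2.1]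
  have := hgap _ _ hz
  exact ⟨z, hz.2.1, (ediv_eq_iff_mul_le_and_lt hM).2 ⟨hkz, by linarith⟩⟩

/-- The set lies in at most `p - 1` consecutive blocks `{x | x / M = k}`. -/
lemma card_le_of_sub_le_of_forall_window {p m : ℕ} (hM : 0 < M)
    (hgap : ∀ a b, ConsecIn B a b → b - a ≤ M)
    (hwin : ∀ k : ℤ, ∃ k' ∈ Ico k (k + p), ∀ x ∈ B, x / M ≠ k')
    (hblock : ∀ k, #(B.filter (· / M = k)) ≤ m) : #B ≤ m * (p - 1) := by
  rcases B.eq_empty_or_nonempty with rfl | hne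
  · simp
  set k₁ := B.min' hne / M
  set k₂ := B.max' hne / M
  obtain ⟨k', hk', hmiss⟩ := hwin k₁
  have hk₂ : k₂ < k' := by
    by_contra! h
    obtain ⟨z, hz, hzk⟩ := exists_mem_ediv_eq_of_sub_le hM hgap (B.min'_mem hne)
      (B.max'_mem hne) (mem_Ico.1 hk').1 h
    exact hmiss z hz hzk
  calc #B ≤ m * #(Icc k₁ k₂) :=
        card_le_mul_card_image_of_maps_to (fun x hx => mem_Icc.2
          ⟨Int.ediv_le_ediv hM (B.min'_le x hx), Int.ediv_le_ediv hM (B.le_max' x hx)⟩)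
          m fun k _ => hblock k
    _ ≤ m * (p - 1) := by
      gcongr
      rw [Int.card_Icc]
      have := mem_Ico.1 hk'
      omega

lemma card_le_of_subset_Ico {b m : ℕ} (hM : 0 < M) (hB : B ⊆ Ico 0 (b * M))
    (hblock : ∀ k, #(B.filter (· / M = k)) ≤ m) : #B ≤ m * b := by
  calc #B ≤ m * #(Ico (0 : ℤ) b) :=
        card_le_mul_card_image_of_maps_to (fun x hx => by
          have := mem_Ico.1 (hB hx)
          exact mem_Ico.2 ⟨Int.ediv_nonneg this.1 hM.le, (Int.ediv_lt_iff_lt_mul hM).2 this.2⟩)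
          m fun k _ => hblock k
    _ = m * b := by simp

lemma card_filter_ediv_le_of_le_sub {X : ℝ} {q : ℕ} (hM : 0 < M)
    (hgap : ∀ a b, ConsecIn B a b → X ≤ b - a) (hMX : (M : ℝ) ≤ q * X) (k : ℤ) :
    #(B.filter (· / M = k)) ≤ q := by
  rcases (B.filter (· / M = k)).eq_empty_or_nonempty with hC | hC
  · simp [hC]
  have hsub : B.filter (· / M = k) ⊆ Icc (k * M) (k * M + M - 1) := fun x hx => by
    have := (ediv_eq_iff_mul_le_and_lt hM).1 (mem_filter.1 hx).2
    exact mem_Icc.2 ⟨this.1, by linarith⟩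
  have hspan := card_sub_one_mul_le_of_le_sub _ hC hsub
    fun a b h => hgap a b (h.of_filter (ordConnected_setOf_ediv_eq hM k))
  have hM' : (0 : ℝ) < M := by exact_mod_cast hM
  have hX : 0 < X := by
    by_contra! hX
    nlinarith [(Nat.cast_nonneg q : (0 : ℝ) ≤ q)]
  push_cast at hspan
  by_contra! hq
  have : (q : ℝ) + 1 ≤ #(B.filter (· / M = k)) := by exact_mod_cast hq
  nlinarith

end Blocks

def pivot (q : ℕ) (k : ℤ) : Fin (q + 1) :=
  ⟨(k % (q + 1 : ℕ)).toNat, by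
    have := Int.emod_lt_of_pos k (by positivity : (0 : ℤ) < (q + 1 : ℕ))
    omega⟩

lemma pivot_eq_of_emod_eq {q : ℕ} {k : ℤ} {i : Fin (q + 1)} (h : k % (q + 1 : ℕ) = i) :
    pivot q k = i :=
  Fin.ext <| by rw [pivot, Fin.val_mk, h, Int.toNat_natCast]

/-- The colouring of `[0, b ^ (n + 1))` with `n + 1` colours: the `k`-th block of length `b ^ n`
carries the colouring of level `n - 1`, with colours renumbered so as to skip `pivot n k`. -/
def color (b : ℕ) : (n : ℕ) → ℤ → Fin (n + 1)
  | 0, _ => 0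
  | n + 1, x =>
    (pivot (n + 1) (x / (b : ℤ) ^ (n + 1))).succAbove (color b n (x % (b : ℤ) ^ (n + 1)))

noncomputable def colorClass (b n : ℕ) (i : Fin (n + 1)) : Finset ℤ :=
  (Ico 0 ((b : ℤ) ^ (n + 1))).filter (color b n · = i)

section Coloring

variable {b n : ℕ}

lemma color_succ_ne_pivot (x : ℤ) :
    color b (n + 1) x ≠ pivot (n + 1) (x / (b : ℤ) ^ (n + 1)) :=
  Fin.succAbove_ne _ _

lemma color_emod_eq_of_color_succ_eq {x y : ℤ}
    (hxy : x / (b : ℤ) ^ (n + 1) = y / (b : ℤ) ^ (n + 1))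
    (h : color b (n + 1) x = color b (n + 1) y) :
    color b n (x % (b : ℤ) ^ (n + 1)) = color b n (y % (b : ℤ) ^ (n + 1)) := by
  simp only [color, hxy] at h
  exact Fin.succAbove_right_injective h

lemma card_colorClass_zero_le (i : Fin 1) : #(colorClass b 0 i) ≤ b :=
  (card_filter_le _ _).trans (by simp)

lemma colorClass_succ_subset (i : Fin (n + 2)) :
    colorClass b (n + 1) i ⊆ Ico 0 (b * (b : ℤ) ^ (n + 1)) := by
  rw [← pow_succ']
  exact filter_subset _ _

lemma exists_forall_ediv_ne_of_subset_colorClass {i : Fin (n + 2)} {B : Finset ℤ}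
    (hB : B ⊆ colorClass b (n + 1) i) (k : ℤ) :
    ∃ k' ∈ Ico k (k + (n + 2 : ℕ)), ∀ x ∈ B, x / (b : ℤ) ^ (n + 1) ≠ k' := by
  have hq : (0 : ℤ) < (n + 2 : ℕ) := by positivity
  refine ⟨k + (i - k) % (n + 2 : ℕ), mem_Ico.2 ⟨?_, ?_⟩, fun x hx hxk => ?_⟩
  · linarith [Int.emod_nonneg (i - k) hq.ne']
  · linarith [Int.emod_lt_of_pos (i - k) hq]
  · have hpivot : pivot (n + 1) (k + (i - k) % (n + 2 : ℕ)) = i := by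
      apply pivot_eq_of_emod_eq
      rw [Int.add_emod_emod, add_sub_cancel, Int.emod_eq_of_lt (by positivity)]
      exact_mod_cast i.isLt
    exact color_succ_ne_pivot x (by rw [hxk, hpivot, (mem_filter.1 (hB hx)).2])

/-- Inside one block, a colour class of level `n + 1` is a translate of a subset of a colour
class of level `n`. -/
lemma card_filter_ediv_le_of_subset_colorClass {P : Finset ℤ → Prop} (hP : IsShiftHereditary P)
    {m : ℕ} (hb : 0 < b) (hm : ∀ j, maxCard P (colorClass b n j) ≤ m) {i : Fin (n + 2)}
    {B : Finset ℤ} (hB : B ⊆ colorClass b (n + 1) i) (hPB : P B) (k : ℤ) :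
    #(B.filter (· / (b : ℤ) ^ (n + 1) = k)) ≤ m := by
  set M : ℤ := (b : ℤ) ^ (n + 1)
  have hM : 0 < M := by positivity
  rcases (B.filter (· / M = k)).eq_empty_or_nonempty with hC | ⟨x₀, hx₀⟩
  · simp [hC]
  obtain ⟨hx₀B, hx₀k⟩ := mem_filter.1 hx₀
  have hsub : B.filter (· / M = k) ⊆ k * M +ᵥ colorClass b n (color b n (x₀ % M)) := by
    intro x hx
    obtain ⟨hxB, hxk⟩ := mem_filter.1 hx
    have hmod : x - k * M = x % M := by rw [Int.emod_def, hxk]; ring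
    rw [mem_vadd_finset_iff_sub_mem, hmod, colorClass, mem_filter, mem_Ico]
    refine ⟨⟨Int.emod_nonneg _ hM.ne', Int.emod_lt_of_pos _ hM⟩,
      color_emod_eq_of_color_succ_eq (hxk.trans hx₀k.symm) ?_⟩
    rw [(mem_filter.1 (hB hxB)).2, (mem_filter.1 (hB hx₀B)).2]
  calc #(B.filter (· / M = k))
      ≤ maxCard P (k * M +ᵥ colorClass b n (color b n (x₀ % M))) :=
        card_le_maxCard hsub (hP.filter (ordConnected_setOf_ediv_eq hM k) hPB)
    _ ≤ maxCard P (colorClass b n (color b n (x₀ % M))) :=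
        maxCard_vadd_le (fun c _ => hP.vadd c) _
    _ ≤ m := hm _

end Coloring

section Bounds

variable {b : ℕ}

lemma regMax_colorClass_succ_le {n m : ℕ} (hb : 0 < b)
    (hm : ∀ j, regMax 2 (colorClass b n j) ≤ m) (i : Fin (n + 2)) :
    regMax 2 (colorClass b (n + 1) i) ≤ max (m * (n + 1)) (2 * b) := by
  set M : ℤ := (b : ℤ) ^ (n + 1)
  have hM : 0 < M := by positivity
  rw [regMax_eq_maxCard]
  refine maxCard_le_iff.2 fun B hB hreg => ?_
  by_cases hsmall : ∀ a c, ConsecIn B a c → c - a ≤ M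
  · exact le_max_of_le_left <| card_le_of_sub_le_of_forall_window hM hsmall
      (exists_forall_ediv_ne_of_subset_colorClass hB)
      (card_filter_ediv_le_of_subset_colorClass (isShiftHereditary_isRegularSet 2) hb hm hB hreg)
  · push Not at hsmall
    obtain ⟨a, c, hac, hMac⟩ := hsmall
    obtain ⟨X, -, hX⟩ := hreg
    have hMX : (M : ℝ) ≤ (2 : ℕ) * X := by
      have : (M : ℝ) + 1 ≤ c - a := by exact_mod_cast hMac
      push_cast
      linarith [(hX a c hac).2]
    exact le_max_of_le_right <| card_le_of_subset_Ico hM (hB.trans (colorClass_succ_subset i))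
      (card_filter_ediv_le_of_le_sub hM (fun a c h => (hX a c h).1) hMX)

lemma convMax_colorClass_succ_le {n m : ℕ} (hb : 0 < b)
    (hm : ∀ j, convMax (colorClass b n j) ≤ m) (i : Fin (n + 2)) :
    convMax (colorClass b (n + 1) i) ≤ m * (n + 1) + b := by
  set M : ℤ := (b : ℤ) ^ (n + 1)
  have hM : 0 < M := by positivity
  rw [convMax_eq_maxCard]
  refine maxCard_le_iff.2 fun B hB hconv => ?_
  obtain ⟨t, hlow, hhigh⟩ := hconv.exists_split M
  have hBlow : B.filter (· ≤ t) ⊆ colorClass b (n + 1) i := (filter_subset _ _).trans hB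
  have hlow_card : #(B.filter (· ≤ t)) ≤ m * (n + 1) :=
    card_le_of_sub_le_of_forall_window hM hlow (exists_forall_ediv_ne_of_subset_colorClass hBlow)
      (card_filter_ediv_le_of_subset_colorClass isShiftHereditary_isConvexSet hb hm hBlow
        (isShiftHereditary_isConvexSet.filter Set.ordConnected_Iic hconv))
  have hhigh_card : #(B.filter (t ≤ ·)) ≤ 1 * b :=
    card_le_of_subset_Ico hM ((filter_subset _ _).trans (hB.trans (colorClass_succ_subset i)))
      (card_filter_ediv_le_of_le_sub hM (X := M + 1)
        (fun a c h => by exact_mod_cast (hhigh a c h : M < c - a)) (by push_cast; linarith))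
  calc #B ≤ #(B.filter (· ≤ t) ∪ B.filter (t ≤ ·)) :=
        card_le_card fun x hx => by
          rw [mem_union, mem_filter, mem_filter]
          exact (le_total x t).imp (⟨hx, ·⟩) (⟨hx, ·⟩)
    _ ≤ #(B.filter (· ≤ t)) + #(B.filter (t ≤ ·)) := card_union_le _ _
    _ ≤ m * (n + 1) + b := by omega

theorem regMax_colorClass_le (hb : 0 < b) :
    ∀ (n : ℕ) (i : Fin (n + 1)), regMax 2 (colorClass b n i) ≤ 2 * n.factorial * b
  | 0, i => maxCard_le_card.trans <| (card_colorClass_zero_le i).trans (by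
      rw [Nat.factorial_zero]; omega)
  | n + 1, i => (regMax_colorClass_succ_le hb (regMax_colorClass_le hb n) i).trans <| max_le
      (le_of_eq (by rw [Nat.factorial_succ]; ring))
      (by nlinarith [Nat.factorial_pos (n + 1)])

theorem convMax_colorClass_le (hb : 0 < b) :
    ∀ (n : ℕ) (i : Fin (n + 1)), convMax (colorClass b n i) ≤ (n + 1).factorial * b
  | 0, i => maxCard_le_card.trans <| (card_colorClass_zero_le i).trans (by simp)
  | n + 1, i => (convMax_colorClass_succ_le hb (convMax_colorClass_le hb n) i).trans <| by
      rw [Nat.factorial_succ (n + 1)]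
      nlinarith [Nat.factorial_pos (n + 1)]

lemma filter_color_sub_one_eq_vadd (n : ℕ) (i : Fin (n + 1)) :
    (Icc (1 : ℤ) ((b ^ (n + 1) : ℕ) : ℤ)).filter (fun x => color b n (x - 1) = i)
      = (1 : ℤ) +ᵥ colorClass b n i := by
  ext x
  simp only [mem_filter, mem_Icc, mem_vadd_finset_iff_sub_mem, colorClass, mem_Ico,
    Nat.cast_pow]
  constructor <;> rintro ⟨h, rfl⟩ <;> exact ⟨by omega, rfl⟩

end Bounds

/-- For any positive integer `r` there are arbitrarily large `N` admitting a
partition of `{1, …, N}` into `r` parts, each with `R_2(A_i) ≤ 2·(r−1)!·N^(1/r)`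
and `C(A_i) ≤ r!·N^(1/r)`. -/
theorem stmt10 (r : ℕ) (hr : 0 < r) (N₀ : ℕ) :
    ∃ N : ℕ, N₀ ≤ N ∧ ∃ A : Fin r → Finset ℤ,
      (∀ i j, i ≠ j → Disjoint (A i) (A j)) ∧
      Finset.univ.biUnion A = Finset.Icc (1 : ℤ) (N : ℤ) ∧
      (∀ i, (regMax 2 (A i) : ℝ) ≤ 2 * (Nat.factorial (r - 1)) * (N : ℝ) ^ ((1 : ℝ) / r)) ∧
      (∀ i, (convMax (A i) : ℝ) ≤ (Nat.factorial r) * (N : ℝ) ^ ((1 : ℝ) / r)) := by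
  obtain ⟨n, rfl⟩ : ∃ n, r = n + 1 := ⟨r - 1, by omega⟩
  set b := max N₀ 1
  have hb : 0 < b := lt_max_of_lt_right one_pos
  have hroot : ((b ^ (n + 1) : ℕ) : ℝ) ^ ((1 : ℝ) / (n + 1 : ℕ)) = b := by
    rw [one_div, Nat.cast_pow, Real.pow_rpow_inv_natCast (Nat.cast_nonneg _) n.succ_ne_zero]
  refine ⟨b ^ (n + 1), (le_max_left _ _).trans (Nat.le_self_pow n.succ_ne_zero _),
    fun i => (Icc (1 : ℤ) ((b ^ (n + 1) : ℕ) : ℤ)).filter (fun x => color b n (x - 1) = i),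
    fun i j hij => disjoint_filter.2 fun _ _ hi hj => hij (hi.symm.trans hj),
    biUnion_filter_eq_of_maps_to fun _ _ => mem_univ _, fun i => ?_, fun i => ?_⟩
  · beta_reduce
    rw [filter_color_sub_one_eq_vadd, hroot, Nat.add_sub_cancel]
    exact_mod_cast
      (maxCard_vadd_le (fun c _ => (isShiftHereditary_isRegularSet 2).vadd c) 1).trans
        (regMax_colorClass_le hb n i)
  · beta_reduce
    rw [filter_color_sub_one_eq_vadd, hroot]
    exact_mod_cast (maxCard_vadd_le (fun c _ => isShiftHereditary_isConvexSet.vadd c) 1).trans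
      (convMax_colorClass_le hb n i)
end

section
/- For any bound N_0, there exists an integer N ≥ N_0 and a set A ⊆ [N] with |A| ≥ N/2 such that R_2(A) ≤ 16·(log N / log log N)² and C(A) ≤ 24·(log N / log log N)³, where log denotes the natural logarithm. -/
open scoped Classical Pointwise

/-!
Take `b = 2D`, `N = b ^ D` and let `A` be the integers in `[1, N]` none of whose `D` lowest
base-`b` digits equals `b - 1`; a union bound over the digit positions gives `|A| ≥ N / 2`.
Every window of length `b ^ (k + 1)` contains a block of `b ^ k` consecutive integers with
`k`-th digit `b - 1`, so a chain in `A` with steps at most `b ^ k` spans less than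
`b ^ (k + 1) + b ^ k`. Hence a 2-regular subset of `A` has `O(b ^ 2)` elements, and since the
gaps of a strictly convex subset increase, at most `O(b ^ 2)` of them lie in each of the `D`
ranges `[b ^ k, b ^ (k + 1))`. Finally `log N / log log N ≥ 3D / 4`.
-/

open Finset

noncomputable def sortedSeq (B : Finset ℤ) (i : ℕ) : ℤ :=
  if h : i < #B then B.orderEmbOfFin rfl ⟨i, h⟩ else 0

section SortedSeq

variable {B : Finset ℤ} {i : ℕ}

lemma sortedSeq_mem (hi : i < #B) : sortedSeq B i ∈ B := by
  simp only [sortedSeq, dif_pos hi]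
  exact orderEmbOfFin_mem B rfl _

lemma strictMonoOn_sortedSeq : StrictMonoOn (sortedSeq B) (Set.Iio #B) := by
  intro i hi j hj hij
  simp only [sortedSeq, dif_pos (Set.mem_Iio.mp hi), dif_pos (Set.mem_Iio.mp hj)]
  exact (B.orderEmbOfFin rfl).strictMono (Fin.mk_lt_mk.mpr hij)

lemma exists_sortedSeq_eq {a : ℤ} (ha : a ∈ B) : ∃ i < #B, sortedSeq B i = a := by
  obtain ⟨⟨i, hi⟩, rfl⟩ : a ∈ Set.range (B.orderEmbOfFin rfl) := by
    rwa [range_orderEmbOfFin, mem_coe]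
  exact ⟨i, hi, dif_pos hi⟩

lemma consecIn_sortedSeq (hi : i + 1 < #B) :
    ConsecIn B (sortedSeq B i) (sortedSeq B (i + 1)) := by
  have hlt := strictMonoOn_sortedSeq (B := B)
  refine ⟨sortedSeq_mem (by omega), sortedSeq_mem hi, hlt (by simp; omega) hi (by omega), ?_⟩
  intro x hx
  obtain ⟨j, hj, rfl⟩ := exists_sortedSeq_eq hx
  rcases le_or_gt j i with h | h
  · exact .inl ((hlt.le_iff_le hj (by simp; omega)).mpr h)
  · exact .inr ((hlt.le_iff_le hi hj).mpr h)

end SortedSeq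

section Steps

variable {n : ℕ}

lemma exists_lt_and_le_succ {α : Type*} [LinearOrder α] {s : ℕ → α} {t : α} (h₀ : s 0 < t)
    (hn : t ≤ s n) :
    ∃ j < n, s j < t ∧ t ≤ s (j + 1) := by
  induction n with
  | zero => exact absurd hn (not_le.mpr h₀)
  | succ n ih =>
    by_cases h : t ≤ s n
    · obtain ⟨j, hj, hjt⟩ := ih h
      exact ⟨j, by omega, hjt⟩
    · exact ⟨n, by omega, not_le.mp h, hn⟩

lemma nsmul_le_sub_of_le_steps {M : Type*} [AddCommGroup M] [PartialOrder M]
    [IsOrderedAddMonoid M] {s : ℕ → M} {y : M} (h : ∀ j < n, y ≤ s (j + 1) - s j) :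
    n • y ≤ s n - s 0 := by
  induction n with
  | zero => simp
  | succ n ih =>
    have := ih fun j hj => h j (by omega)
    calc (n + 1) • y = n • y + y := succ_nsmul y n
      _ ≤ (s n - s 0) + (s (n + 1) - s n) := add_le_add this (h n (by omega))
      _ = s (n + 1) - s 0 := by abel

end Steps

def digit (b : ℤ) (k : ℕ) (n : ℤ) : ℤ := n / b ^ k % b

section Digits

variable {b : ℤ} {k : ℕ}

lemma digit_add_mul (hb : 0 < b) (q : ℤ) {c r : ℤ} (hc : 0 ≤ c) (hcb : c < b)
    (hr : 0 ≤ r) (hrk : r < b ^ k) :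
    digit b k (q * b ^ (k + 1) + c * b ^ k + r) = c := by
  have hpk : 0 < b ^ k := pow_pos hb k
  have h : q * b ^ (k + 1) + c * b ^ k + r = r + (c + b * q) * b ^ k := by ring
  rw [digit, h, Int.add_mul_ediv_right _ _ hpk.ne', Int.ediv_eq_zero_of_lt hr hrk, zero_add,
    Int.add_mul_emod_self_left, Int.emod_eq_of_lt hc hcb]

lemma eq_digit_expansion (b : ℤ) (k : ℕ) (n : ℤ) :
    n = n / b ^ k / b * b ^ (k + 1) + digit b k n * b ^ k + n % b ^ k := by
  have h₁ := Int.emod_add_mul_ediv n (b ^ k)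
  have h₂ := Int.emod_add_mul_ediv (n / b ^ k) b
  rw [digit]
  linear_combination -h₁ - b ^ k * h₂

lemma exists_block_digit_eq (hb : 0 < b) (k : ℕ) (x : ℤ) :
    ∃ t, x < t ∧ t ≤ x + b ^ (k + 1) ∧ ∀ y, t ≤ y → y < t + b ^ k → digit b k y = b - 1 := by
  set w := x - (b - 1) * b ^ k
  have hP : 0 < b ^ (k + 1) := pow_pos hb _
  have hw := Int.emod_add_mul_ediv w (b ^ (k + 1))
  have hw₀ := Int.emod_nonneg w hP.ne'
  have hw₁ := Int.emod_lt_of_pos w hP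
  set t := (w / b ^ (k + 1) + 1) * b ^ (k + 1) + (b - 1) * b ^ k with ht
  refine ⟨t, by linarith, by linarith, fun y hy₁ hy₂ => ?_⟩
  have h := digit_add_mul hb (w / b ^ (k + 1) + 1) (c := b - 1) (by linarith) (by linarith)
    (sub_nonneg.mpr hy₁) (show y - t < b ^ k by linarith)
  rwa [← ht, add_sub_cancel] at h

end Digits

noncomputable def goodSet (b D : ℕ) : Finset ℤ :=
  {n ∈ Icc 1 ((b : ℤ) ^ D) | ∀ k < D, digit b k n ≠ b - 1}

section GoodSet

variable {b D k : ℕ}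

lemma goodSet_subset_Icc : goodSet b D ⊆ Icc 1 ((b : ℤ) ^ D) := filter_subset _ _

lemma card_filter_digit_eq_le (hb : 2 ≤ b) (hk : k < D) :
    #{n ∈ Icc 1 ((b : ℤ) ^ D) | digit b k n = b - 1} ≤ b ^ (D - 1) := by
  have hb₀ : (0 : ℤ) < b := by omega
  have hpk : (0 : ℤ) < (b : ℤ) ^ k := pow_pos hb₀ k
  have hsub : {n ∈ Icc 1 ((b : ℤ) ^ D) | digit b k n = b - 1} ⊆
      (Ico 0 ((b : ℤ) ^ (D - 1 - k)) ×ˢ Ico 0 ((b : ℤ) ^ k)).image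
        fun qr => qr.1 * (b : ℤ) ^ (k + 1) + (b - 1) * (b : ℤ) ^ k + qr.2 := by
    intro n hn
    obtain ⟨hn, hdigit⟩ := mem_filter.mp hn
    obtain ⟨hn₁, hn₂⟩ := mem_Icc.mp hn
    have hexp := eq_digit_expansion b k n
    rw [hdigit] at hexp
    have hD : (b : ℤ) ^ D = (b : ℤ) ^ (D - 1 - k) * (b : ℤ) ^ (k + 1) := by
      rw [← pow_add]; congr 1; omega
    have hlt : n < (b : ℤ) ^ D := by
      refine lt_of_le_of_ne hn₂ fun h => ?_
      have htop : digit b k ((b : ℤ) ^ D) = 0 := by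
        simpa [hD] using digit_add_mul hb₀ ((b : ℤ) ^ (D - 1 - k)) le_rfl hb₀ le_rfl hpk
      rw [h] at hdigit
      omega
    have hq₀ : 0 ≤ n / (b : ℤ) ^ k / b := Int.ediv_nonneg (Int.ediv_nonneg (by omega) hpk.le) hb₀.le
    have hr₀ := Int.emod_nonneg n hpk.ne'
    have hr₁ := Int.emod_lt_of_pos n hpk
    have hq₁ : n / (b : ℤ) ^ k / b < (b : ℤ) ^ (D - 1 - k) := by
      rw [hD] at hlt
      have : 0 ≤ (b - 1 : ℤ) * (b : ℤ) ^ k := mul_nonneg (by omega) hpk.le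
      exact lt_of_mul_lt_mul_right (by linarith) (pow_pos hb₀ (k + 1)).le
    exact mem_image.mpr ⟨(n / (b : ℤ) ^ k / b, n % (b : ℤ) ^ k),
      mem_product.mpr ⟨mem_Ico.mpr ⟨hq₀, hq₁⟩, mem_Ico.mpr ⟨hr₀, hr₁⟩⟩, hexp.symm⟩
  calc #{n ∈ Icc 1 ((b : ℤ) ^ D) | digit b k n = b - 1}
      ≤ #(Ico 0 ((b : ℤ) ^ (D - 1 - k)) ×ˢ Ico 0 ((b : ℤ) ^ k)) :=
        (card_le_card hsub).trans card_image_le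
    _ = b ^ (D - 1) := by
      rw [card_product, Int.card_Ico, Int.card_Ico, sub_zero, sub_zero, ← Nat.cast_pow,
        ← Nat.cast_pow, Int.toNat_natCast, Int.toNat_natCast, ← pow_add]
      congr 1; omega

lemma pow_le_card_goodSet_add (hb : 2 ≤ b) : b ^ D ≤ #(goodSet b D) + D * b ^ (D - 1) := by
  have hcover : Icc 1 ((b : ℤ) ^ D) ⊆ goodSet b D ∪
      (range D).biUnion fun k => {n ∈ Icc 1 ((b : ℤ) ^ D) | digit b k n = b - 1} := by
    intro n hn
    by_cases hgood : ∀ k < D, digit b k n ≠ b - 1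
    · exact mem_union_left _ (mem_filter.mpr ⟨hn, hgood⟩)
    · push Not at hgood
      obtain ⟨k, hk, hdigit⟩ := hgood
      exact mem_union_right _ (mem_biUnion.mpr ⟨k, mem_range.mpr hk, mem_filter.mpr ⟨hn, hdigit⟩⟩)
  have hbad : #((range D).biUnion fun k => {n ∈ Icc 1 ((b : ℤ) ^ D) | digit b k n = b - 1})
      ≤ D * b ^ (D - 1) := by
    refine card_biUnion_le.trans ?_
    simpa using sum_le_sum fun k hk => card_filter_digit_eq_le (D := D) hb (mem_range.mp hk)
  calc b ^ D = #(Icc 1 ((b : ℤ) ^ D)) := by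
        rw [Int.card_Icc, add_sub_cancel_right, ← Nat.cast_pow, Int.toNat_natCast]
    _ ≤ _ := (card_le_card hcover).trans (card_union_le _ _)
    _ ≤ _ := by omega

end GoodSet

section Walks

variable {b D k : ℕ} {s : ℕ → ℤ} {n : ℕ}

lemma sub_lt_of_steps_le (hb : 0 < b) (hk : k < D) (hs : ∀ j ≤ n, s j ∈ goodSet b D)
    (hstep : ∀ j < n, s (j + 1) - s j ≤ (b : ℤ) ^ k) :
    s n - s 0 < (b : ℤ) ^ (k + 1) + (b : ℤ) ^ k := by
  by_contra! hspan
  obtain ⟨t, ht₀, ht₁, hblock⟩ := exists_block_digit_eq (b := b) (by omega) k (s 0)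
  have hpk : (0 : ℤ) < (b : ℤ) ^ k := pow_pos (by omega) k
  obtain ⟨j, hj, hjt, htj⟩ := exists_lt_and_le_succ ht₀ (show t ≤ s n by linarith)
  have hjump : t + (b : ℤ) ^ k ≤ s (j + 1) := by
    by_contra! h
    exact (mem_filter.mp (hs (j + 1) hj)).2 k hk (hblock _ htj h)
  linarith [hstep j hj]

lemma sub_lt_of_steps_lt_pow_succ (hb : 0 < b) (hk : k < D) (hs : ∀ j ≤ n, s j ∈ goodSet b D)
    (hstep : k + 1 < D → ∀ j < n, s (j + 1) - s j < (b : ℤ) ^ (k + 1)) :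
    s n - s 0 < ((b : ℤ) ^ 2 + b) * (b : ℤ) ^ k := by
  have hpk : (0 : ℤ) < (b : ℤ) ^ k := pow_pos (by omega) k
  rcases (Nat.succ_le_of_lt hk).lt_or_eq with hk' | hk'
  · calc s n - s 0 < (b : ℤ) ^ (k + 1 + 1) + (b : ℤ) ^ (k + 1) :=
          sub_lt_of_steps_le hb hk' hs fun j hj => (hstep hk' j hj).le
      _ = ((b : ℤ) ^ 2 + b) * (b : ℤ) ^ k := by ring
  · have h₀ := mem_Icc.mp (goodSet_subset_Icc (hs 0 (Nat.zero_le n)))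
    have hn := mem_Icc.mp (goodSet_subset_Icc (hs n le_rfl))
    rw [← hk', pow_succ] at hn
    nlinarith

lemma lt_of_steps_mem_Ico (hb : 0 < b) (hk : k < D) (hs : ∀ j ≤ n, s j ∈ goodSet b D)
    (hlow : ∀ j < n, (b : ℤ) ^ k ≤ s (j + 1) - s j)
    (hup : k + 1 < D → ∀ j < n, s (j + 1) - s j < (b : ℤ) ^ (k + 1)) :
    n < b ^ 2 + b := by
  have hpk : (0 : ℤ) < (b : ℤ) ^ k := pow_pos (by omega) k
  have hlower := nsmul_le_sub_of_le_steps hlow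
  have hupper := sub_lt_of_steps_lt_pow_succ hb hk hs hup
  rw [nsmul_eq_mul] at hlower
  exact_mod_cast lt_of_mul_lt_mul_right (hlower.trans_lt hupper) hpk.le

end Walks

def cappedLog (b D : ℕ) (x : ℤ) : ℕ := min (Nat.log b x.toNat) (D - 1)

section CappedLog

variable {b D : ℕ} {x : ℤ}

lemma pow_cappedLog_le (hx : 1 ≤ x) : (b : ℤ) ^ cappedLog b D x ≤ x := by
  have h : b ^ cappedLog b D x ≤ x.toNat := Nat.pow_le_of_le_log (by omega) (min_le_left _ _)
  have hx' : ((x.toNat : ℕ) : ℤ) = x := Int.toNat_of_nonneg (by omega)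
  rw [← hx']
  exact_mod_cast h

lemma lt_pow_cappedLog_succ (hb : 2 ≤ b) (hD : cappedLog b D x + 1 < D) :
    x < (b : ℤ) ^ (cappedLog b D x + 1) := by
  have hlog : cappedLog b D x = Nat.log b x.toNat := by unfold cappedLog at hD ⊢; omega
  have h := Nat.lt_pow_succ_log_self (by omega : 1 < b) x.toNat
  rw [hlog]
  have : x ≤ x.toNat := Int.self_le_toNat x
  exact_mod_cast this.trans_lt (by exact_mod_cast h)

lemma cappedLog_lt (hD : 1 ≤ D) : cappedLog b D x < D := by unfold cappedLog; omega

end CappedLog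

section Bounds

variable {b D : ℕ} {s : ℕ → ℤ} {n : ℕ}

lemma lt_of_steps_le_two_mul (hb : 2 ≤ b) (hD : 1 ≤ D) (hs : ∀ j ≤ n, s j ∈ goodSet b D)
    {X : ℝ} (hstep : ∀ j < n, s j < s (j + 1) ∧
      X ≤ (s (j + 1) : ℝ) - s j ∧ (s (j + 1) : ℝ) - s j ≤ 2 * X) :
    n < 2 * (b ^ 2 + b) := by
  set Y := max X 1
  have hlow : ∀ j < n, Y ≤ (s (j + 1) : ℝ) - s j := fun j hj => by
    obtain ⟨hlt, hX, -⟩ := hstep j hj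
    exact max_le hX (by exact_mod_cast (by omega : (1 : ℤ) ≤ s (j + 1) - s j))
  set z := ⌊2 * Y⌋
  have hz : 1 ≤ z := Int.le_floor.mpr (by push_cast; linarith [le_max_right X 1])
  have hstep_le : ∀ j < n, s (j + 1) - s j ≤ z := fun j hj =>
    Int.le_floor.mpr (by push_cast; linarith [(hstep j hj).2.2, le_max_left X 1])
  have hupper := sub_lt_of_steps_lt_pow_succ (by omega) (cappedLog_lt (x := z) hD) hs
    fun hk j hj => (hstep_le j hj).trans_lt (lt_pow_cappedLog_succ hb hk)
  have hlower := nsmul_le_sub_of_le_steps (s := fun j => (s j : ℝ)) hlow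
  have hpow : ((b : ℝ) ^ cappedLog b D z) ≤ 2 * Y :=
    (by exact_mod_cast pow_cappedLog_le hz : ((b : ℝ) ^ cappedLog b D z) ≤ z).trans (Int.floor_le _)
  have hupper' : (s n : ℝ) - s 0 < ((b : ℝ) ^ 2 + b) * (b : ℝ) ^ cappedLog b D z := by
    exact_mod_cast hupper
  rw [nsmul_eq_mul] at hlower
  have hY : 0 < Y := lt_of_lt_of_le one_pos (le_max_right X 1)
  have : (n : ℝ) * Y < (2 * (b ^ 2 + b) : ℕ) * Y := by
    push_cast
    nlinarith [sq_nonneg (b : ℝ)]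
  exact_mod_cast lt_of_mul_lt_mul_right this hY.le

lemma card_filter_cappedLog_eq_lt (hb : 2 ≤ b) (hD : 1 ≤ D) (hs : ∀ j ≤ n, s j ∈ goodSet b D)
    (hpos : ∀ j < n, s j < s (j + 1))
    (hmono : MonotoneOn (fun j => s (j + 1) - s j) (Set.Iio n)) (k : ℕ) :
    #{j ∈ range n | cappedLog b D (s (j + 1) - s j) = k} < b ^ 2 + b := by
  set F := {j ∈ range n | cappedLog b D (s (j + 1) - s j) = k}
  rcases F.eq_empty_or_nonempty with hF | hF
  · rw [hF, card_empty]; positivity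
  have hstep_mono : ∀ i i', i ≤ i' → i' < n → s (i + 1) - s i ≤ s (i' + 1) - s i' :=
    fun i i' hii' hi' => hmono (Set.mem_Iio.mpr (by omega)) (Set.mem_Iio.mpr hi') hii'
  obtain ⟨i₁, hi₁F, hi₁⟩ : ∃ i ∈ F, ∀ j ∈ F, i ≤ j := ⟨_, F.min'_mem hF, F.min'_le⟩
  obtain ⟨i₂, hi₂F, hi₂⟩ : ∃ i ∈ F, ∀ j ∈ F, j ≤ i := ⟨_, F.max'_mem hF, F.le_max'⟩
  obtain ⟨hi₁n, hk₁⟩ := mem_filter.mp hi₁F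
  obtain ⟨hi₂n, hk₂⟩ := mem_filter.mp hi₂F
  have hi₁₂ := hi₁ i₂ hi₂F
  have hi₂n := mem_range.mp hi₂n
  have hcard : #F ≤ i₂ + 1 - i₁ :=
    calc #F ≤ #(Icc i₁ i₂) := card_le_card fun j hj => mem_Icc.mpr ⟨hi₁ j hj, hi₂ j hj⟩
      _ = i₂ + 1 - i₁ := Nat.card_Icc _ _
  refine hcard.trans_lt (lt_of_steps_mem_Ico (s := fun j => s (i₁ + j)) (by omega)
    (hk₁ ▸ cappedLog_lt hD) (fun j hj => hs (i₁ + j) (by omega)) (fun j hj => ?_)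
    (fun hk j hj => ?_))
  · calc (b : ℤ) ^ k ≤ s (i₁ + 1) - s i₁ :=
          hk₁ ▸ pow_cappedLog_le (by linarith [hpos _ (mem_range.mp hi₁n)])
      _ ≤ s (i₁ + j + 1) - s (i₁ + j) := hstep_mono _ _ (by omega) (by omega)
  · calc s (i₁ + j + 1) - s (i₁ + j) ≤ s (i₂ + 1) - s i₂ := hstep_mono _ _ (by omega) hi₂n
      _ < (b : ℤ) ^ (k + 1) := hk₂ ▸ lt_pow_cappedLog_succ hb (hk₂ ▸ hk)

lemma le_of_monotone_steps (hb : 2 ≤ b) (hD : 1 ≤ D) (hs : ∀ j ≤ n, s j ∈ goodSet b D)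
    (hpos : ∀ j < n, s j < s (j + 1))
    (hmono : MonotoneOn (fun j => s (j + 1) - s j) (Set.Iio n)) :
    n ≤ (b ^ 2 + b - 1) * D :=
  calc n = #(range n) := (card_range n).symm
    _ ≤ (b ^ 2 + b - 1) * #((range n).image fun j => cappedLog b D (s (j + 1) - s j)) :=
        card_le_mul_card_image _ _ fun k _ => by
          have := card_filter_cappedLog_eq_lt hb hD hs hpos hmono k
          omega
    _ ≤ (b ^ 2 + b - 1) * #(range D) := by
        gcongr
        exact image_subset_iff.mpr fun _ _ => mem_range.mpr (cappedLog_lt hD)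
    _ = (b ^ 2 + b - 1) * D := by rw [card_range]

end Bounds

section SetBounds

variable {b D : ℕ} {B : Finset ℤ}

lemma card_le_of_isRegularSet (hb : 2 ≤ b) (hD : 1 ≤ D) (hBA : B ⊆ goodSet b D)
    (hB : IsRegularSet 2 B) : #B ≤ 2 * (b ^ 2 + b) := by
  obtain ⟨X, -, hX⟩ := hB
  rcases Nat.eq_zero_or_pos #B with h | h
  · omega
  have := lt_of_steps_le_two_mul (n := #B - 1) (s := sortedSeq B) hb hD
    (fun j hj => hBA (sortedSeq_mem (by omega))) fun j hj =>
      have hc := consecIn_sortedSeq (B := B) (i := j) (by omega)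
      ⟨hc.2.2.1, hX _ _ hc⟩
  omega

lemma card_le_of_isConvexSet (hb : 2 ≤ b) (hD : 1 ≤ D) (hBA : B ⊆ goodSet b D)
    (hB : IsConvexSet B) : #B ≤ D * (b ^ 2 + b) := by
  rcases Nat.eq_zero_or_pos #B with h | h
  · omega
  have hmono : MonotoneOn (fun j => sortedSeq B (j + 1) - sortedSeq B j) (Set.Iio (#B - 1)) :=
    monotoneOn_of_le_add_one Set.ordConnected_Iio fun j _ _ hj => by
      simp only [Set.mem_Iio] at hj
      exact (hB _ _ _ (consecIn_sortedSeq (by omega)) (consecIn_sortedSeq (by omega))).le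
  have := le_of_monotone_steps (n := #B - 1) (s := sortedSeq B) hb hD
    (fun j hj => hBA (sortedSeq_mem (by omega)))
    (fun j hj => (consecIn_sortedSeq (by omega)).2.2.1) hmono
  have hDP : D ≤ (b ^ 2 + b) * D := Nat.le_mul_of_pos_left D (by positivity)
  rw [Nat.sub_one_mul] at this
  have := Nat.mul_comm D (b ^ 2 + b)
  omega

end SetBounds

lemma three_quarters_mul_le_log_div_log_log {D : ℕ} (hD : 2 ≤ D) :
    3 / 4 * (D : ℝ) ≤ Real.log ((2 * D) ^ D : ℕ) / Real.log (Real.log ((2 * D) ^ D : ℕ)) := by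
  have hDR : (2 : ℝ) ≤ D := by exact_mod_cast hD
  set u := Real.log (2 * D) with hu_def
  have hlogN : Real.log ((2 * D) ^ D : ℕ) = D * u := by
    rw [Nat.cast_pow, Nat.cast_mul, Nat.cast_ofNat, Real.log_pow]
  have hu : 1 < u := by
    rw [Real.lt_log_iff_exp_lt (by linarith)]
    linarith [Real.exp_one_lt_d9]
  have hlogD : Real.log D = u - Real.log 2 := by
    rw [hu_def, Real.log_mul (by norm_num) (by positivity)]
    ring
  have hloglogN : Real.log (D * u) = (u - Real.log 2) + Real.log u := by
    rw [Real.log_mul (by positivity) (by positivity), hlogD]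
  have hlog_u : Real.log (u / 3) ≤ u / 3 - 1 := Real.log_le_sub_one_of_pos (by positivity)
  have hlog_3_2 : Real.log (3 / 2) ≤ 3 / 2 - 1 := Real.log_le_sub_one_of_pos (by norm_num)
  rw [Real.log_div (by positivity) (by norm_num)] at hlog_u
  rw [Real.log_div (by norm_num) (by norm_num)] at hlog_3_2
  have hpos : 0 < Real.log (D * u) := Real.log_pos (by nlinarith)
  rw [hlogN, le_div_iff₀ hpos]
  nlinarith

lemma regMax_goodSet_le {b D : ℕ} (hb : 2 ≤ b) (hD : 1 ≤ D) :
    regMax 2 (goodSet b D) ≤ 2 * (b ^ 2 + b) :=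
  Finset.sup_le fun B hB => by
    rw [mem_filter, mem_powerset] at hB
    exact card_le_of_isRegularSet hb hD hB.1 hB.2

lemma convMax_goodSet_le {b D : ℕ} (hb : 2 ≤ b) (hD : 1 ≤ D) :
    convMax (goodSet b D) ≤ D * (b ^ 2 + b) :=
  Finset.sup_le fun B hB => by
    rw [mem_filter, mem_powerset] at hB
    exact card_le_of_isConvexSet hb hD hB.1 hB.2

lemma pow_le_two_mul_card_goodSet {D : ℕ} (hD : 1 ≤ D) :
    (2 * D) ^ D ≤ 2 * #(goodSet (2 * D) D) := by
  have h := pow_le_card_goodSet_add (b := 2 * D) (D := D) (by omega)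
  have hpow : (2 * D) ^ D = 2 * (D * (2 * D) ^ (D - 1)) := by
    rw [← mul_assoc, ← pow_succ', Nat.sub_add_cancel hD]
  omega

/-- There are arbitrarily large `N` and a set `A ⊆ {1, …, N}` with `|A| ≥ N/2`,
`R_2(A) ≤ 16·(log N / log log N)²`, and `C(A) ≤ 24·(log N / log log N)³`. -/
theorem stmt11 (N₀ : ℕ) :
    ∃ N : ℕ, N₀ ≤ N ∧ ∃ A : Finset ℤ, A ⊆ Finset.Icc (1 : ℤ) (N : ℤ) ∧
      (N : ℝ) / 2 ≤ (A.card : ℝ) ∧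
      (regMax 2 A : ℝ) ≤ 16 * (Real.log N / Real.log (Real.log N)) ^ 2 ∧
      (convMax A : ℝ) ≤ 24 * (Real.log N / Real.log (Real.log N)) ^ 3 := by
  -- `D ≥ 4` is what makes `2 ((2D)^2 + 2D) ≤ 16 (3D/4)^2 = 9 D^2`.
  set D := max N₀ 4
  have hD : 4 ≤ D := le_max_right _ _
  have hN : N₀ ≤ (2 * D) ^ D :=
    calc N₀ ≤ 2 * D := (le_max_left N₀ 4).trans (by omega)
      _ ≤ (2 * D) ^ D := Nat.le_self_pow (by omega) _
  have hDR : (4 : ℝ) ≤ D := by exact_mod_cast hD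
  have hratio := three_quarters_mul_le_log_div_log_log (D := D) (by omega)
  have hreg : (regMax 2 (goodSet (2 * D) D) : ℝ) ≤ 2 * ((2 * D) ^ 2 + 2 * D) := by
    exact_mod_cast regMax_goodSet_le (b := 2 * D) (by omega) (by omega)
  have hconv : (convMax (goodSet (2 * D) D) : ℝ) ≤ D * ((2 * D) ^ 2 + 2 * D) := by
    exact_mod_cast convMax_goodSet_le (b := 2 * D) (by omega) (by omega)
  have hcard : (((2 * D) ^ D : ℕ) : ℝ) ≤ 2 * #(goodSet (2 * D) D) := by
    exact_mod_cast pow_le_two_mul_card_goodSet (by omega)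
  refine ⟨(2 * D) ^ D, hN, goodSet (2 * D) D, by rw [Nat.cast_pow]; exact goodSet_subset_Icc,
    by linarith, ?_, ?_⟩
  · calc _ ≤ (16 : ℝ) * (3 / 4 * D) ^ 2 := by nlinarith
      _ ≤ _ := by gcongr
  · calc _ ≤ (24 : ℝ) * (3 / 4 * D) ^ 3 := by nlinarith
      _ ≤ _ := by gcongr
end

section
/- For every positive integer n, there exists a set A ⊆ [2·16^n] with |A| = 2^n such that R_2(A − A) ≤ 3 and C(A − A) ≤ 2n. -/
open scoped Classical Pointwise

/-!
`A` consists of the numbers `1 + ∑_{i ∈ S} 16^(i+1)` with `S ⊆ {0, …, n-1}`, so every element of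
`A − A` is `∑ δᵢ 16^(i+1)` with signed digits `δᵢ ∈ {-1, 0, 1}`, and `A − A` is ordered like the
colexicographic order of digit vectors. For consecutive elements `x < y` of a subset of `A − A`, let
`j` (the scale of the gap) be the most significant digit in which they differ: then
`y − x ∈ [13/15, 32/15] · 16^(j+1)`, so a gap of larger scale is more than twice a gap of smaller
scale. Along a chain, digit `j` increases at every gap of scale `j`, so no three consecutive gaps
share a scale, and two consecutive gaps of scale `0` are both `16`.
In a `2`-regular subset all gaps have the same scale, hence there are at most two gaps. In a
strictly convex subset the scales are nondecreasing, each occurs at most twice and `0` at most once, hence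
there are at most `2n - 1` gaps.
-/

open Finset

lemma Finset.exists_consecIn_enum (B : Finset ℤ) :
    ∃ f : ℕ → ℤ, ∀ k, k + 1 < #B → ConsecIn B (f k) (f (k + 1)) := by
  let e := B.orderEmbOfFin rfl
  refine ⟨fun k => if h : k < #B then e ⟨k, h⟩ else 0, fun k hk => ?_⟩
  simp only [dif_pos (show k < #B by omega), dif_pos hk]
  refine ⟨B.orderEmbOfFin_mem rfl _, B.orderEmbOfFin_mem rfl _,
    e.strictMono (Fin.mk_lt_mk.2 k.lt_succ_self), fun c hc => ?_⟩
  obtain ⟨i, rfl⟩ : c ∈ Set.range e := by rwa [B.range_orderEmbOfFin rfl]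
  rcases le_or_gt (i : ℕ) k with h | h
  · exact Or.inl (e.monotone (Fin.mk_le_mk.2 h))
  · exact Or.inr (e.monotone (Fin.mk_le_mk.2 h))

def digitSum (n : ℕ) (δ : ℕ → ℤ) : ℤ :=
  ∑ i ∈ range n, δ i * 16 ^ (i + 1)

def LeadingDigitLT (n : ℕ) (δ δ' : ℕ → ℤ) (j : ℕ) : Prop :=
  j < n ∧ δ j < δ' j ∧ ∀ i, j < i → i < n → δ i = δ' i

lemma digitSum_sub (n : ℕ) (δ δ' : ℕ → ℤ) :
    digitSum n δ' - digitSum n δ = digitSum n (δ' - δ) := by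
  simp only [digitSum, Pi.sub_apply, sub_mul, sum_sub_distrib]

lemma digitSum_eq_of_eq_zero {n j : ℕ} {η : ℕ → ℤ} (hj : j < n)
    (hη : ∀ i, j < i → i < n → η i = 0) :
    digitSum n η = η j * 16 ^ (j + 1) + digitSum j η := by
  have htrunc : digitSum n η = digitSum (j + 1) η := by
    refine (sum_subset (range_subset_range.2 hj) fun i hi hij => ?_).symm
    rw [mem_range] at hi hij
    rw [hη i (by omega) hi, zero_mul]
  rw [htrunc, digitSum, sum_range_succ, add_comm, digitSum]

lemma abs_digitSum_le {j : ℕ} {η : ℕ → ℤ} {c : ℤ} (hc : 0 ≤ c) (hη : ∀ i < j, |η i| ≤ c) :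
    15 * |digitSum j η| ≤ c * 16 ^ (j + 1) := by
  induction j with
  | zero => simp [digitSum, hc]
  | succ j ih =>
    have hlast : |η j * 16 ^ (j + 1)| ≤ c * 16 ^ (j + 1) := by
      rw [abs_mul, abs_of_pos (by positivity : (0 : ℤ) < 16 ^ (j + 1))]
      exact mul_le_mul_of_nonneg_right (hη j j.lt_succ_self) (by positivity)
    have hsplit : digitSum (j + 1) η = digitSum j η + η j * 16 ^ (j + 1) := sum_range_succ _ _
    have := abs_add_le (digitSum j η) (η j * 16 ^ (j + 1))
    rw [hsplit, pow_succ 16 (j + 1)]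
    nlinarith [ih fun i hi => hη i (by omega)]

section SignedDigits

variable {n : ℕ} {δ δ' : ℕ → ℤ}

/-- The leading digit of the difference is 1 or 2 and the lower ones contribute less than
`2/15` of its place value. -/
lemma LeadingDigitLT.digitSum_sub_mem (hδ : ∀ i, |δ i| ≤ 1) (hδ' : ∀ i, |δ' i| ≤ 1) {j : ℕ}
    (h : LeadingDigitLT n δ δ' j) :
    13 * 16 ^ (j + 1) ≤ 15 * (digitSum n δ' - digitSum n δ) ∧
      15 * (digitSum n δ' - digitSum n δ) ≤ 32 * 16 ^ (j + 1) := by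
  obtain ⟨hj, hlt, htop⟩ := h
  have hdiff : ∀ i, |(δ' - δ) i| ≤ 2 := fun i => by
    have := abs_le.1 (hδ i); have := abs_le.1 (hδ' i)
    rw [Pi.sub_apply, abs_le]; constructor <;> linarith
  have hsplit := digitSum_eq_of_eq_zero (η := δ' - δ) hj fun i hji hin => by
    rw [Pi.sub_apply, htop i hji hin, sub_self]
  have hrest := abs_digitSum_le (j := j) (c := 2) (by norm_num) fun i _ => hdiff i
  have := le_abs_self (digitSum j (δ' - δ)); have := neg_abs_le (digitSum j (δ' - δ))
  have hlead := abs_le.1 (hdiff j)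
  rw [Pi.sub_apply] at hlead
  have hpow : (0 : ℤ) < 16 ^ (j + 1) := by positivity
  rw [digitSum_sub, hsplit, Pi.sub_apply]
  constructor <;> nlinarith

lemma LeadingDigitLT.digitSum_lt (hδ : ∀ i, |δ i| ≤ 1) (hδ' : ∀ i, |δ' i| ≤ 1) {j : ℕ}
    (h : LeadingDigitLT n δ δ' j) : digitSum n δ < digitSum n δ' := by
  have := (h.digitSum_sub_mem hδ hδ').1
  have : (0 : ℤ) < 16 ^ (j + 1) := by positivity
  linarith

lemma exists_leadingDigitLT_of_ne (h : ∃ i < n, δ i ≠ δ' i) :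
    ∃ j, LeadingDigitLT n δ δ' j ∨ LeadingDigitLT n δ' δ j := by
  obtain ⟨j, hj, hmax⟩ := ((range n).filter fun i => δ i ≠ δ' i).exists_max_image id
    (by simpa [Finset.Nonempty] using h)
  rw [mem_filter, mem_range] at hj
  have htop : ∀ i, j < i → i < n → δ i = δ' i := fun i hji hin => by
    by_contra hne
    exact absurd (hmax i (by simp [hin, hne])) (by simpa using hji)
  rcases lt_or_gt_of_ne hj.2 with hlt | hgt
  · exact ⟨j, Or.inl ⟨hj.1, hlt, htop⟩⟩
  · exact ⟨j, Or.inr ⟨hj.1, hgt, fun i hji hin => (htop i hji hin).symm⟩⟩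

lemma digitSum_ne_of_ne (hδ : ∀ i, |δ i| ≤ 1) (hδ' : ∀ i, |δ' i| ≤ 1)
    (h : ∃ i < n, δ i ≠ δ' i) : digitSum n δ ≠ digitSum n δ' := by
  obtain ⟨j, hj | hj⟩ := exists_leadingDigitLT_of_ne h
  · exact (hj.digitSum_lt hδ hδ').ne
  · exact (hj.digitSum_lt hδ' hδ).ne'

lemma exists_leadingDigitLT_of_digitSum_lt (hδ : ∀ i, |δ i| ≤ 1) (hδ' : ∀ i, |δ' i| ≤ 1)
    (h : digitSum n δ < digitSum n δ') : ∃ j, LeadingDigitLT n δ δ' j := by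
  have hne : ∃ i < n, δ i ≠ δ' i := by
    by_contra! heq
    exact h.ne (sum_congr rfl fun i hi => by rw [heq i (mem_range.1 hi)])
  obtain ⟨j, hj | hj⟩ := exists_leadingDigitLT_of_ne hne
  · exact ⟨j, hj⟩
  · exact absurd h (hj.digitSum_lt hδ' hδ).not_gt

end SignedDigits

section Chains

variable {n : ℕ} {δ₀ δ₁ δ₂ δ₃ : ℕ → ℤ}

lemma le_of_leadingDigitLT_of_le_two_mul (h₀ : ∀ i, |δ₀ i| ≤ 1) (h₁ : ∀ i, |δ₁ i| ≤ 1)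
    (h₂ : ∀ i, |δ₂ i| ≤ 1) (h₃ : ∀ i, |δ₃ i| ≤ 1) {j j' : ℕ} (h₀₁ : LeadingDigitLT n δ₀ δ₁ j)
    (h₂₃ : LeadingDigitLT n δ₂ δ₃ j')
    (hle : digitSum n δ₁ - digitSum n δ₀ ≤ 2 * (digitSum n δ₃ - digitSum n δ₂)) : j ≤ j' := by
  by_contra! hj
  have hlarge := (h₀₁.digitSum_sub_mem h₀ h₁).1
  have hsmall := (h₂₃.digitSum_sub_mem h₂ h₃).2
  have hpow : 16 * 16 ^ (j' + 1) ≤ (16 : ℤ) ^ (j + 1) := by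
    rw [← pow_succ']; exact pow_le_pow_right₀ (by norm_num) (by omega)
  have : (0 : ℤ) < 16 ^ (j' + 1) := by positivity
  linarith

/-- A signed digit can increase at most twice. -/
lemma lt_of_leadingDigitLT_three (h₀ : ∀ i, |δ₀ i| ≤ 1) (h₃ : ∀ i, |δ₃ i| ≤ 1) {j₀ j₁ j₂ : ℕ}
    (h₀₁ : LeadingDigitLT n δ₀ δ₁ j₀) (h₁₂ : LeadingDigitLT n δ₁ δ₂ j₁)
    (h₂₃ : LeadingDigitLT n δ₂ δ₃ j₂) (hj₀₁ : j₀ ≤ j₁) (hj₁₂ : j₁ ≤ j₂) : j₀ < j₂ := by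
  by_contra! hj
  rw [show j₁ = j₀ by omega] at h₁₂
  rw [show j₂ = j₀ by omega] at h₂₃
  have := abs_le.1 (h₀ j₀); have := abs_le.1 (h₃ j₀)
  have := h₀₁.2.1; have := h₁₂.2.1; have := h₂₃.2.1
  omega

lemma digitSum_sub_eq_of_leadingDigitLT_zero (h₀ : ∀ i, |δ₀ i| ≤ 1) (h₂ : ∀ i, |δ₂ i| ≤ 1)
    (h₀₁ : LeadingDigitLT n δ₀ δ₁ 0) (h₁₂ : LeadingDigitLT n δ₁ δ₂ 0) :
    digitSum n δ₁ - digitSum n δ₀ = digitSum n δ₂ - digitSum n δ₁ := by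
  have gap_eq {δ δ' : ℕ → ℤ} (h : LeadingDigitLT n δ δ' 0) :
      digitSum n δ' - digitSum n δ = (δ' 0 - δ 0) * 16 := by
    rw [digitSum_sub, digitSum_eq_of_eq_zero h.1 fun i hi hin => by
      rw [Pi.sub_apply, h.2.2 i hi hin, sub_self]]
    simp [digitSum]
  have := abs_le.1 (h₀ 0); have := abs_le.1 (h₂ 0)
  have := h₀₁.2.1; have := h₁₂.2.1
  rw [gap_eq h₀₁, gap_eq h₁₂]
  omega

end Chains

def digitsOf (S : Finset ℕ) (i : ℕ) : ℤ :=
  if i ∈ S then 1 else 0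

lemma digitsOf_nonneg (S : Finset ℕ) (i : ℕ) : 0 ≤ digitsOf S i := by
  unfold digitsOf; split_ifs <;> simp

lemma abs_digitsOf_le (S : Finset ℕ) (i : ℕ) : |digitsOf S i| ≤ 1 := by
  unfold digitsOf; split_ifs <;> simp

def digitSet (n : ℕ) : Finset ℤ :=
  (range n).powerset.image fun S => 1 + digitSum n (digitsOf S)

lemma digitSet_subset (n : ℕ) : digitSet n ⊆ Icc 1 (2 * 16 ^ n) := by
  simp only [subset_iff, digitSet, mem_image, mem_Icc]
  rintro _ ⟨S, -, rfl⟩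
  have hnonneg : 0 ≤ digitSum n (digitsOf S) :=
    sum_nonneg fun i _ => mul_nonneg (digitsOf_nonneg S i) (by positivity)
  have hle := abs_digitSum_le (c := 1) zero_le_one fun i (_ : i < n) => abs_digitsOf_le S i
  have := le_abs_self (digitSum n (digitsOf S))
  have : (1 : ℤ) ≤ 16 ^ n := one_le_pow₀ (by norm_num)
  rw [pow_succ] at hle
  constructor <;> linarith

lemma card_digitSet (n : ℕ) : #(digitSet n) = 2 ^ n := by
  rw [digitSet, card_image_of_injOn, card_powerset, card_range]
  intro S hS T hT hST
  simp only [coe_powerset, Set.mem_preimage, Set.mem_powerset_iff, coe_subset] at hS hT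
  by_contra hne
  obtain ⟨i, hi⟩ : ∃ i, ¬(i ∈ S ↔ i ∈ T) := by
    by_contra! h
    exact hne (ext h)
  have hin : i < n := by
    by_cases hiS : i ∈ S
    · exact mem_range.1 (hS hiS)
    · exact mem_range.1 (hT (by tauto))
  refine digitSum_ne_of_ne (abs_digitsOf_le S) (abs_digitsOf_le T) ⟨i, hin, ?_⟩
    (add_left_cancel hST)
  unfold digitsOf
  split_ifs <;> simp_all

lemma exists_digitSum_eq_of_mem_sub {n : ℕ} {x : ℤ} (hx : x ∈ digitSet n - digitSet n) :
    ∃ δ : ℕ → ℤ, (∀ i, |δ i| ≤ 1) ∧ digitSum n δ = x := by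
  simp only [mem_sub, digitSet, mem_image] at hx
  obtain ⟨_, ⟨S, -, rfl⟩, _, ⟨T, -, rfl⟩, rfl⟩ := hx
  refine ⟨digitsOf S - digitsOf T, fun i => ?_, by rw [← digitSum_sub]; ring⟩
  have := abs_le.1 (abs_digitsOf_le S i); have := abs_le.1 (abs_digitsOf_le T i)
  have := digitsOf_nonneg S i; have := digitsOf_nonneg T i
  rw [Pi.sub_apply, abs_le]; constructor <;> linarith

lemma exists_leadingDigitLT_chain {n : ℕ} {B : Finset ℤ} (hB : B ⊆ digitSet n - digitSet n) :
    ∃ (δ : ℕ → ℕ → ℤ) (J : ℕ → ℕ), (∀ k i, |δ k i| ≤ 1) ∧ ∀ k, k + 1 < #B →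
      ConsecIn B (digitSum n (δ k)) (digitSum n (δ (k + 1))) ∧
        LeadingDigitLT n (δ k) (δ (k + 1)) (J k) := by
  obtain ⟨b, hb⟩ := B.exists_consecIn_enum
  have hdigits : ∀ k, ∃ δ : ℕ → ℤ, (∀ i, |δ i| ≤ 1) ∧ (b k ∈ B → digitSum n δ = b k) := by
    intro k
    by_cases hk : b k ∈ B
    · obtain ⟨δ, hδ, hsum⟩ := exists_digitSum_eq_of_mem_sub (hB hk)
      exact ⟨δ, hδ, fun _ => hsum⟩
    · exact ⟨0, by simp, fun h => absurd h hk⟩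
  choose δ hδ hsum using hdigits
  have hconsec : ∀ k, k + 1 < #B → ConsecIn B (digitSum n (δ k)) (digitSum n (δ (k + 1))) :=
    fun k hk => by rw [hsum k (hb k hk).1, hsum (k + 1) (hb k hk).2.1]; exact hb k hk
  have hlead : ∀ k, ∃ j, k + 1 < #B → LeadingDigitLT n (δ k) (δ (k + 1)) j := fun k => by
    by_cases hk : k + 1 < #B
    · obtain ⟨j, hj⟩ :=
        exists_leadingDigitLT_of_digitSum_lt (hδ k) (hδ (k + 1)) (hconsec k hk).2.2.1
      exact ⟨j, fun _ => hj⟩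
    · exact ⟨0, fun h => absurd h hk⟩
  choose J hJ using hlead
  exact ⟨δ, J, hδ, fun k hk => ⟨hconsec k hk, hJ k hk⟩⟩

lemma regMax_two_digitSet_sub_le (n : ℕ) : regMax 2 (digitSet n - digitSet n) ≤ 3 := by
  refine Finset.sup_le fun B hB => ?_
  rw [mem_filter, mem_powerset] at hB
  obtain ⟨hBD, X, -, hreg⟩ := hB
  by_contra! hcard
  obtain ⟨δ, J, hδ, hchain⟩ := exists_leadingDigitLT_chain hBD
  set g : ℕ → ℤ := fun k => digitSum n (δ (k + 1)) - digitSum n (δ k)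
  have hgap : ∀ k l, k + 1 < #B → l + 1 < #B → g k ≤ 2 * g l := by
    intro k l hk hl
    have := (hreg _ _ (hchain k hk).1).2
    have := (hreg _ _ (hchain l hl).1).1
    have : ((g k : ℤ) : ℝ) ≤ ((2 * g l : ℤ) : ℝ) := by push_cast [g]; linarith
    exact_mod_cast this
  have hJ : ∀ k l, k + 1 < #B → l + 1 < #B → J k ≤ J l := fun k l hk hl =>
    le_of_leadingDigitLT_of_le_two_mul (hδ k) (hδ (k + 1)) (hδ l) (hδ (l + 1))
      (hchain k hk).2 (hchain l hl).2 (hgap k l hk hl)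
  exact (lt_of_leadingDigitLT_three (hδ 0) (hδ 3) (hchain 0 (by omega)).2
    (hchain 1 (by omega)).2 (hchain 2 (by omega)).2 (hJ 0 1 (by omega) (by omega))
    (hJ 1 2 (by omega) (by omega))).not_ge (hJ 2 0 (by omega) (by omega))

lemma add_le_of_lt_add_two {J : ℕ → ℕ} {m : ℕ} (h : ∀ k, k + 2 < m → J k < J (k + 2))
    (k : ℕ) {t : ℕ} (hkt : k + 2 * t < m) : J k + t ≤ J (k + 2 * t) := by
  induction t with
  | zero => simp
  | succ t ih =>
    have := ih (by omega)
    have := h (k + 2 * t) (by omega)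
    rw [show k + 2 * (t + 1) = k + 2 * t + 2 by ring]
    omega

lemma convMax_digitSet_sub_le {n : ℕ} (hn : 0 < n) :
    convMax (digitSet n - digitSet n) ≤ 2 * n := by
  refine Finset.sup_le fun B hB => ?_
  rw [mem_filter, mem_powerset] at hB
  obtain ⟨hBD, hconv⟩ := hB
  by_contra! hcard
  obtain ⟨δ, J, hδ, hchain⟩ := exists_leadingDigitLT_chain hBD
  set g : ℕ → ℤ := fun k => digitSum n (δ (k + 1)) - digitSum n (δ k)
  have hg_pos : ∀ k, k + 1 < #B → 0 < g k := fun k hk => sub_pos.2 (hchain k hk).1.2.2.1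
  have hg_lt : ∀ k, k + 2 < #B → g k < g (k + 1) := fun k hk =>
    hconv _ _ _ (hchain k (by omega)).1 (hchain (k + 1) hk).1
  have hmono : ∀ k, k + 2 < #B → J k ≤ J (k + 1) := fun k hk =>
    le_of_leadingDigitLT_of_le_two_mul (hδ k) (hδ (k + 1)) (hδ (k + 1)) (hδ (k + 2))
      (hchain k (by omega)).2 (hchain (k + 1) hk).2 (by linarith [hg_lt k hk, hg_pos (k + 1) hk])
  have hstep : ∀ k, k + 3 < #B → J k < J (k + 2) := fun k hk =>
    lt_of_leadingDigitLT_three (hδ k) (hδ (k + 3)) (hchain k (by omega)).2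
      (hchain (k + 1) (by omega)).2 (hchain (k + 2) hk).2 (hmono k (by omega))
      (hmono (k + 1) (by omega))
  have hJ₁ : 0 < J 1 := by
    by_contra! h
    have h₁ : J 1 = 0 := by omega
    have h₀ : J 0 = 0 := by have : J 0 ≤ J 1 := hmono 0 (by omega); omega
    have h₀₁ := (hchain 0 (by omega)).2
    have h₁₂ := (hchain 1 (by omega)).2
    rw [h₀] at h₀₁
    rw [h₁] at h₁₂
    exact (hg_lt 0 (by omega)).ne
      (digitSum_sub_eq_of_leadingDigitLT_zero (hδ 0) (hδ 2) h₀₁ h₁₂)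
  have hlast := add_le_of_lt_add_two (m := #B - 1) (fun k hk => hstep k (by omega)) 1
    (t := n - 1) (by omega)
  have := (hchain (1 + 2 * (n - 1)) (by omega)).2.1
  omega

/-- For every positive integer `n`, there is a set `A ⊆ {1, …, 2·16^n}` with
`|A| = 2^n`, `R_2(A − A) ≤ 3`, and `C(A − A) ≤ 2n`. -/
theorem stmt12 (n : ℕ) (hn : 0 < n) :
    ∃ A : Finset ℤ, A ⊆ Finset.Icc (1 : ℤ) (2 * 16 ^ n : ℤ) ∧
      A.card = 2 ^ n ∧ regMax 2 (A - A) ≤ 3 ∧ convMax (A - A) ≤ 2 * n :=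
  ⟨digitSet n, digitSet_subset n, card_digitSet n, regMax_two_digitSet_sub_le n,
    convMax_digitSet_sub_le hn⟩
end
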